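/- arXiv:2408.16378 — 9 statements merged into one kernel-verified Lean document; each statement's English description precedes it below -/
import Mathlib

section
/- Let n ≥ 1 and let f : 𝔽₂ⁿ → 𝔽₂ be a Boolean function. Then f agrees on every input of even Hamming weight with the second least significant bit of the Hamming weight — that is, f(x) = ((|x|/2) mod 2) for every x ∈ 𝔽₂ⁿ with |x| even — if and only if there exists a Boolean function g : 𝔽₂ⁿ → 𝔽₂ such that for every x ∈ 𝔽₂ⁿ one has f(x) = ⨁_{1 ≤ i < j ≤ n} xᵢ·xⱼ ⊕ ((⨁_{j=1}^{n} xⱼ) · g(x)), where all sums and products are taken in 𝔽₂. -/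
/-!
On an input of Hamming weight `w`, the quadratic form `∑_{i<j} xᵢxⱼ` counts the pairs of ones, so
it equals `w.choose 2` mod 2, and `∑ xⱼ = w` mod 2. For `w = 2m` we get
`w.choose 2 = m (2m - 1) ≡ m = w / 2`, so a function has the required values on even weights iff
it agrees with the quadratic form on the hyperplane `∑ xⱼ = 0`; off that hyperplane
`(∑ xⱼ) · g x = g x` is arbitrary.
-/

open Finset

lemma ZMod.sum_eq_card_filter_eq_one {ι : Type*} [Fintype ι] (x : ι → ZMod 2) :
    ∑ i, x i = #{i | x i = 1} := by
  rw [← sum_boole]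
  refine sum_congr rfl fun i _ => ?_
  generalize x i = a
  fin_cases a <;> rfl

lemma ZMod.sum_lt_mul_eq_choose_two {ι : Type*} [Fintype ι] [LinearOrder ι] (x : ι → ZMod 2) :
    (∑ i, ∑ j, if i < j then x i * x j else 0) = ((#{i | x i = 1}).choose 2 : ℕ) := by
  rw [← card_product_filter_lt, natCast_card_filter, ← filter_product, sum_filter, sum_product]
  refine sum_congr rfl fun i _ => sum_congr rfl fun j _ => ?_
  generalize x i = a, x j = b
  by_cases hij : i < j <;> fin_cases a <;> fin_cases b <;> simp [hij] <;> decide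

lemma Nat.cast_choose_two_of_even {k : ℕ} (hk : Even k) :
    ((k.choose 2 : ℕ) : ZMod 2) = (k / 2 : ℕ) := by
  obtain ⟨m, rfl⟩ := hk
  rw [Nat.choose_two_right, ← two_mul, mul_assoc, Nat.mul_div_cancel_left _ two_pos,
    Nat.mul_div_cancel_left _ two_pos]
  rcases m with _ | m
  · rfl
  · rw [show 2 * (m + 1) - 1 = 2 * m + 1 by omega]
    push_cast
    rw [show (2 : ZMod 2) = 0 from rfl]
    ring

theorem stmt_0_general (n : ℕ) (f : (Fin n → ZMod 2) → ZMod 2) :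
    (∀ x : Fin n → ZMod 2,
        Even ((univ.filter (fun i => x i = 1)).card) →
        f x = (((univ.filter (fun i => x i = 1)).card / 2 : ℕ) : ZMod 2))
      ↔ ∃ g : (Fin n → ZMod 2) → ZMod 2, ∀ x : Fin n → ZMod 2,
          f x = (∑ i : Fin n, ∑ j : Fin n, if i < j then x i * x j else 0)
                + (∑ j : Fin n, x j) * g x := by
  have quadratic_of_even {x : Fin n → ZMod 2} (hx : Even #{i | x i = 1}) :
      (∑ i, ∑ j, if i < j then x i * x j else 0) = ((#{i | x i = 1} / 2 : ℕ) : ZMod 2) := by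
    rw [ZMod.sum_lt_mul_eq_choose_two, Nat.cast_choose_two_of_even hx]
  have linear_of_even {x : Fin n → ZMod 2} (hx : Even #{i | x i = 1}) : ∑ j, x j = 0 := by
    rw [ZMod.sum_eq_card_filter_eq_one, ZMod.natCast_eq_zero_iff_even]
    exact hx
  constructor
  · intro hf
    refine ⟨fun x => f x - ∑ i, ∑ j, if i < j then x i * x j else 0, fun x => ?_⟩
    rcases Nat.even_or_odd #{i | x i = 1} with he | ho
    · rw [linear_of_even he, zero_mul, add_zero, hf x he, quadratic_of_even he]
    · rw [ZMod.sum_eq_card_filter_eq_one x, ZMod.natCast_eq_one_iff_odd.mpr ho, one_mul,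
        add_sub_cancel]
  · rintro ⟨g, hg⟩ x he
    rw [hg x, linear_of_even he, zero_mul, add_zero, quadratic_of_even he]

/-- A Boolean function `f : 𝔽₂ⁿ → 𝔽₂` agrees on every even-Hamming-weight input with the
second least significant bit of the Hamming weight iff it has the form
`⨁_{i<j} xᵢxⱼ ⊕ (⨁_j xⱼ)·g(x)` for some Boolean function `g`. -/
theorem stmt_0 (n : ℕ) (hn : 1 ≤ n) (f : (Fin n → ZMod 2) → ZMod 2) :
    (∀ x : Fin n → ZMod 2,
        Even ((univ.filter (fun i => x i = 1)).card) →
        f x = (((univ.filter (fun i => x i = 1)).card / 2 : ℕ) : ZMod 2))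
      ↔ ∃ g : (Fin n → ZMod 2) → ZMod 2, ∀ x : Fin n → ZMod 2,
          f x = (∑ i : Fin n, ∑ j : Fin n, if i < j then x i * x j else 0)
                + (∑ j : Fin n, x j) * g x :=
  stmt_0_general n f
end

section
/- Let n ≥ 2 and let f : 𝔽₂ⁿ → 𝔽₂ satisfy f(x) = ((|x|/2) mod 2) for every x ∈ 𝔽₂ⁿ of even Hamming weight |x|. For 1 ≤ i < j ≤ n define the degree-two algebraic normal form coefficient c_{ij}(f) := f(0) ⊕ f(eᵢ) ⊕ f(eⱼ) ⊕ f(eᵢ ⊕ eⱼ) ∈ 𝔽₂, where e_k denotes the k-th standard basis vector of 𝔽₂ⁿ. Then the number of pairs (i, j) with i < j and c_{ij}(f) = 1 is at least n(n − 2)/4; in particular every such f has Ω(n²) degree-two terms in its algebraic normal form. -/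
/-!
On weights 0 and 2 the hypothesis pins `f 0 = 0` and `f (eᵢ + eⱼ) = 1`, so the coefficient of
`xᵢxⱼ` is `1 + f eᵢ + f eⱼ`, which is `1` exactly when `f eᵢ = f eⱼ`. Colouring the coordinates by
`f eᵢ ∈ 𝔽₂`, the coefficients equal to `1` are the monochromatic pairs, and by Cauchy–Schwarz a
2-colouring of `n` points has at least `n(n - 2)/4` of them.
-/

open Finset

theorem sq_card_le_card_mul_card_filter_eq {ι α : Type*} [Fintype ι] [Fintype α] [DecidableEq α]
    (g : ι → α) :
    Fintype.card ι ^ 2 ≤ Fintype.card α * #{p : ι × ι | g p.1 = g p.2} := by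
  have hfibers : #{p : ι × ι | g p.1 = g p.2} = ∑ a, #{i | g i = a} ^ 2 := by
    rw [card_eq_sum_card_fiberwise (f := fun p => g p.1) (t := univ) (by simp)]
    refine sum_congr rfl fun a _ => ?_
    rw [sq, ← card_product]
    congr 1
    ext ⟨i, j⟩
    simp only [mem_filter, mem_univ, true_and, mem_product]
    constructor
    · rintro ⟨hij, rfl⟩; exact ⟨rfl, hij.symm⟩
    · rintro ⟨rfl, hj⟩; exact ⟨hj.symm, rfl⟩
  rw [hfibers, ← card_univ, card_eq_sum_card_fiberwise (f := g) (t := univ) (by simp)]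
  exact sq_sum_le_card_mul_sum_sq

theorem card_filter_eq_two_mul_card_filter_lt_add_card {ι : Type*} [Fintype ι] [LinearOrder ι]
    (r : ι → ι → Prop) [DecidableRel r] (hrefl : ∀ i, r i i) (hsymm : ∀ i j, r i j → r j i) :
    #{p : ι × ι | r p.1 p.2} = 2 * #{p : ι × ι | p.1 < p.2 ∧ r p.1 p.2} + Fintype.card ι := by
  have hsplit : ({p : ι × ι | r p.1 p.2} : Finset (ι × ι)) =
      ({p : ι × ι | (p.1 < p.2 ∧ r p.1 p.2 ∨ p.2 < p.1 ∧ r p.1 p.2) ∨ p.1 = p.2} :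
        Finset (ι × ι)) := by
    refine filter_congr fun p _ => ?_
    rcases lt_trichotomy p.1 p.2 with h | h | h
    · simp [h, h.not_gt, h.ne]
    · simp [h, hrefl p.2]
    · simp [h, h.not_gt, h.ne']
  have hswap : #{p : ι × ι | p.2 < p.1 ∧ r p.1 p.2} = #{p : ι × ι | p.1 < p.2 ∧ r p.1 p.2} := by
    refine card_nbij' Prod.swap Prod.swap ?_ ?_ (fun p _ => p.swap_swap) (fun p _ => p.swap_swap) <;>
    · intro p hp
      simp only [coe_filter, mem_univ, true_and, Set.mem_ofPred_eq, Prod.fst_swap,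
        Prod.snd_swap] at hp ⊢
      exact ⟨hp.1, hsymm _ _ hp.2⟩
  have hdiag : #{p : ι × ι | p.1 = p.2} = Fintype.card ι := by
    rw [← univ_product_univ, ← diag_eq_filter, diag_card, card_univ]
  rw [hsplit, filter_or, filter_or, card_union_of_disjoint, card_union_of_disjoint, hswap, hdiag]
  · ring
  all_goals
    refine disjoint_left.2 fun p h1 h2 => ?_
    simp only [mem_union, mem_filter, mem_univ, true_and] at h1 h2
    grind

theorem card_mul_sub_two_le_four_mul_card_filter_lt_eq {ι α : Type*} [Fintype ι] [LinearOrder ι]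
    [Fintype α] [DecidableEq α] (hα : Fintype.card α ≤ 2) (g : ι → α) :
    Fintype.card ι * (Fintype.card ι - 2) ≤ 4 * #{p : ι × ι | p.1 < p.2 ∧ g p.1 = g p.2} := by
  have h := (sq_card_le_card_mul_card_filter_eq g).trans (Nat.mul_le_mul_right _ hα)
  rw [card_filter_eq_two_mul_card_filter_lt_add_card (fun i j => g i = g j) (fun _ => rfl)
    (fun _ _ => Eq.symm), sq] at h
  rw [Nat.mul_sub]
  omega

theorem card_filter_eq_one_single_add_single {ι : Type*} [Fintype ι] [DecidableEq ι] {i j : ι}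
    (hij : i ≠ j) : #{k | (Pi.single i 1 + Pi.single j 1 : ι → ZMod 2) k = 1} = 2 := by
  convert card_pair hij using 2
  ext k
  rcases eq_or_ne k i with rfl | hki
  · simp [hij]
  · rcases eq_or_ne k j with rfl | hkj
    · simp [hki]
    · simp [hki, hkj]

theorem stmt_1_general (n : ℕ) (f : (Fin n → ZMod 2) → ZMod 2)
    (hf : ∀ x : Fin n → ZMod 2,
        Even ((univ.filter (fun i => x i = 1)).card) →
        f x = (((univ.filter (fun i => x i = 1)).card / 2 : ℕ) : ZMod 2)) :
    n * (n - 2) / 4 ≤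
      ((univ : Finset (Fin n × Fin n)).filter (fun p =>
          p.1 < p.2 ∧
            f 0 + f (Pi.single p.1 1) + f (Pi.single p.2 1)
              + f (Pi.single p.1 1 + Pi.single p.2 1) = 1)).card := by
  have hf0 : f 0 = 0 := by simpa using hf 0 (by simp)
  have hf2 {i j : Fin n} (hij : i ≠ j) : f (Pi.single i 1 + Pi.single j 1) = 1 := by
    have hweight := card_filter_eq_one_single_add_single (ι := Fin n) hij
    have h := hf _ (hweight ▸ even_two)
    rw [hweight] at h
    simpa using h
  calc n * (n - 2) / 4
      ≤ #{p : Fin n × Fin n | p.1 < p.2 ∧ f (Pi.single p.1 1) = f (Pi.single p.2 1)} := by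
        have h := card_mul_sub_two_le_four_mul_card_filter_lt_eq (ZMod.card 2).le
          fun i : Fin n => f (Pi.single i 1)
        rw [Fintype.card_fin] at h
        omega
    _ = _ := by
        refine congrArg card (filter_congr fun p _ => and_congr_right fun hlt => ?_)
        rw [hf0, hf2 hlt.ne, zero_add, add_eq_right, CharTwo.add_eq_zero]

/-- Any Boolean function agreeing on even-weight inputs with the second least significant
bit of the Hamming weight has at least `n(n-2)/4` degree-two terms in its algebraic
normal form, where the ANF coefficient of `xᵢxⱼ` is the second finite difference
`f(0) ⊕ f(eᵢ) ⊕ f(eⱼ) ⊕ f(eᵢ ⊕ eⱼ)`. -/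
theorem stmt_1 (n : ℕ) (hn : 2 ≤ n) (f : (Fin n → ZMod 2) → ZMod 2)
    (hf : ∀ x : Fin n → ZMod 2,
        Even ((univ.filter (fun i => x i = 1)).card) →
        f x = (((univ.filter (fun i => x i = 1)).card / 2 : ℕ) : ZMod 2)) :
    n * (n - 2) / 4 ≤
      ((univ : Finset (Fin n × Fin n)).filter (fun p =>
          p.1 < p.2 ∧
            f 0 + f (Pi.single p.1 1) + f (Pi.single p.2 1)
              + f (Pi.single p.1 1 + Pi.single p.2 1) = 1)).card :=
  stmt_1_general n f hf
end

section
/- For every n ≥ 0 and every b : {1, …, n} → {0, 1, 2}, the exponential sum over all strings x ∈ {0,1,2}ⁿ whose integer coordinate sum Σⱼ xⱼ is divisible by 3 satisfies | Σ_{x : 3 ∣ Σⱼ xⱼ} exp( (2πi/9) · Σ_{j=1}^{n} xⱼ (2 + 3 bⱼ) ) | ≤ (51/20)ⁿ, where the coordinates xⱼ and the values bⱼ are treated as integers in the exponent. -/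
open Finset

noncomputable def mxgZeta : ℂ := Complex.exp (2 * (Real.pi : ℂ) * Complex.I / 9)

lemma mxg_zeta_pow (c : ℕ) :
    mxgZeta ^ c = Complex.exp (((2 * Real.pi * (c : ℝ) / 9 : ℝ) : ℂ) * Complex.I) := by
  rw [mxgZeta, ← Complex.exp_nat_mul]
  congr 1
  push_cast
  ring

lemma mxg_aux (θ : ℝ) :
    ‖1 + Complex.exp ((θ : ℂ) * Complex.I) + Complex.exp ((θ : ℂ) * Complex.I) ^ 2‖
      = |1 + 2 * Real.cos θ| := by
  have e : Complex.exp ((θ : ℂ) * Complex.I) * Complex.exp (-(θ : ℂ) * Complex.I) = 1 := by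
    rw [← Complex.exp_add,
      show (θ : ℂ) * Complex.I + -(θ : ℂ) * Complex.I = 0 by ring, Complex.exp_zero]
  have hsum : 1 + Complex.exp ((θ : ℂ) * Complex.I) + Complex.exp ((θ : ℂ) * Complex.I) ^ 2
      = Complex.exp ((θ : ℂ) * Complex.I) * ((1 : ℂ) + 2 * ((Real.cos θ : ℝ) : ℂ)) := by
    rw [Complex.ofReal_cos, Complex.cos]
    linear_combination -e
  rw [hsum, norm_mul, Complex.norm_exp_ofReal_mul_I, one_mul,
    show (1 : ℂ) + 2 * ((Real.cos θ : ℝ) : ℂ) = (((1 + 2 * Real.cos θ : ℝ)) : ℂ) by push_cast; ring,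
    Complex.norm_real, Real.norm_eq_abs]

lemma mxg_abs_sum (c : ℕ) :
    ‖∑ v : Fin 3, mxgZeta ^ ((v : ℕ) * c)‖ =
      |1 + 2 * Real.cos (2 * Real.pi * (c : ℝ) / 9)| := by
  rw [Fin.sum_univ_three]
  show ‖mxgZeta ^ ((0:ℕ) * c) + mxgZeta ^ ((1:ℕ) * c) + mxgZeta ^ ((2:ℕ) * c)‖ = _
  rw [zero_mul, one_mul, pow_zero, show (2:ℕ) * c = c * 2 by ring, pow_mul, mxg_zeta_pow]
  exact mxg_aux _

lemma mxg_cos29 : Real.cos (2 * Real.pi / 9) ≤ 31 / 40 := by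
  have h1 : Real.pi < 3.15 := Real.pi_lt_d2
  have h2 : (3.14 : ℝ) < Real.pi := Real.pi_gt_d2
  set x : ℝ := 2 * Real.pi / 9 with hx
  have hx0 : 0 ≤ x := by positivity
  have hxu : x ≤ 0.7 := by rw [hx]; nlinarith
  have hxl : (0.69 : ℝ) ≤ x := by rw [hx]; nlinarith
  have habs : |x| ≤ 1 := by rw [abs_of_nonneg hx0]; linarith
  have hb := Real.cos_bound habs
  rw [abs_of_nonneg hx0] at hb
  rw [abs_le] at hb
  nlinarith [hb.1, hb.2, sq_nonneg x, pow_le_pow_left₀ hx0 hxu 4,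
    sq_le_sq' (by linarith : -(0.7:ℝ) ≤ x) hxu]

lemma mxg_cos_le (m : ℕ) (hm : m ≤ 4) :
    Real.cos (2 * Real.pi * (2 + 3 * (m : ℝ)) / 9) ≤ 31 / 40 := by
  have hpi : 0 < Real.pi := Real.pi_pos
  have h1 : Real.pi < 3.15 := Real.pi_lt_d2
  interval_cases m
  · have he : 2 * Real.pi * (2 + 3 * ((0:ℕ) : ℝ)) / 9 = Real.pi / 2 - Real.pi / 18 := by
      push_cast; ring
    rw [he, Real.cos_pi_div_two_sub]
    have := Real.sin_le (show (0:ℝ) ≤ Real.pi / 18 by positivity)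
    linarith
  · have : Real.cos (2 * Real.pi * (2 + 3 * ((1:ℕ) : ℝ)) / 9) ≤ 0 := by
      apply Real.cos_nonpos_of_pi_div_two_le_of_le <;> push_cast <;> nlinarith
    linarith
  · have he : 2 * Real.pi * (2 + 3 * ((2:ℕ) : ℝ)) / 9 = 2 * Real.pi - 2 * Real.pi / 9 := by
      push_cast; ring
    rw [he, Real.cos_two_pi_sub]
    exact mxg_cos29
  · have he : 2 * Real.pi * (2 + 3 * ((3:ℕ) : ℝ)) / 9
        = (Real.pi / 2 - Real.pi / 18) + 2 * Real.pi := by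
      push_cast; ring
    rw [he, Real.cos_add_two_pi, Real.cos_pi_div_two_sub]
    have := Real.sin_le (show (0:ℝ) ≤ Real.pi / 18 by positivity)
    linarith
  · have he : 2 * Real.pi * (2 + 3 * ((4:ℕ) : ℝ)) / 9
        = (2 * Real.pi * (2 + 3 * (1:ℝ)) / 9) + 2 * Real.pi := by
      push_cast; ring
    rw [he, Real.cos_add_two_pi]
    have : Real.cos (2 * Real.pi * (2 + 3 * (1:ℝ)) / 9) ≤ 0 := by
      apply Real.cos_nonpos_of_pi_div_two_le_of_le <;> nlinarith
    linarith

lemma mxg_inner (m : ℕ) (hm : m ≤ 4) :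
    ‖∑ v : Fin 3, mxgZeta ^ ((v : ℕ) * (2 + 3 * m))‖ ≤ 51 / 20 := by
  rw [mxg_abs_sum]
  have h1 : Real.cos (2 * Real.pi * (((2 + 3 * m : ℕ)) : ℝ) / 9) ≤ 31 / 40 := by
    push_cast
    exact mxg_cos_le m hm
  have h2 := Real.neg_one_le_cos (2 * Real.pi * (((2 + 3 * m : ℕ)) : ℝ) / 9)
  rw [abs_le]
  constructor <;> linarith

lemma mxg_omega : mxgZeta ^ 3 = Complex.exp (2 * (Real.pi : ℂ) * Complex.I / 3) := by
  rw [mxgZeta, ← Complex.exp_nat_mul]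
  congr 1
  push_cast
  ring

lemma mxg_prim : IsPrimitiveRoot (mxgZeta ^ 3) 3 := by
  rw [mxg_omega]
  have h := Complex.isPrimitiveRoot_exp 3 (by norm_num)
  simpa using h

lemma mxg_indic (s : ℕ) :
    (∑ k : Fin 3, (mxgZeta ^ 3) ^ ((k : ℕ) * s)) = if 3 ∣ s then 3 else 0 := by
  have hrw : ∀ k : Fin 3, (mxgZeta ^ 3) ^ ((k : ℕ) * s) = ((mxgZeta ^ 3) ^ s) ^ (k : ℕ) := by
    intro k; rw [mul_comm, pow_mul]
  simp only [hrw]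
  set y : ℂ := (mxgZeta ^ 3) ^ s with hy
  have hy3 : y ^ 3 = 1 := by
    rw [hy, ← pow_mul, mul_comm, pow_mul, mxg_prim.pow_eq_one, one_pow]
  rw [Fin.sum_univ_three]
  show y ^ (0:ℕ) + y ^ (1:ℕ) + y ^ (2:ℕ) = _
  by_cases h : 3 ∣ s
  · rw [if_pos h, hy, (mxg_prim.pow_eq_one_iff_dvd s).2 h]
    norm_num
  · rw [if_neg h]
    have hy1 : y ≠ 1 := fun hy1 => h ((mxg_prim.pow_eq_one_iff_dvd s).1 hy1)
    have hz : (y - 1) * (y ^ (0:ℕ) + y ^ (1:ℕ) + y ^ (2:ℕ)) = 0 := by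
      have : (y - 1) * (y ^ (0:ℕ) + y ^ (1:ℕ) + y ^ (2:ℕ)) = y ^ 3 - 1 := by ring
      rw [this, hy3, sub_self]
    rcases mul_eq_zero.1 hz with h' | h'
    · exact absurd (by linear_combination h' : y = 1) hy1
    · exact h'

lemma mxg_exp_eq (n : ℕ) (b x : Fin n → Fin 3) :
    Complex.exp ((2 * (Real.pi : ℂ) * Complex.I / 9) *
        (∑ j, ((x j : ℕ) : ℂ) * (2 + 3 * ((b j : ℕ) : ℂ))))
      = ∏ j, mxgZeta ^ ((x j : ℕ) * (2 + 3 * (b j : ℕ))) := by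
  rw [Finset.mul_sum, Complex.exp_sum]
  refine Finset.prod_congr rfl fun j _ => ?_
  rw [mxgZeta, ← Complex.exp_nat_mul]
  congr 1
  push_cast
  ring

/-- Exponential-sum bound underlying the classical hardness of the ternary Modular XOR
game under uniform inputs: for every shift vector `b : {1,…,n} → {0,1,2}`, the sum over
ternary strings `x` with `3 ∣ Σⱼ xⱼ` of `exp((2πi/9)·Σⱼ xⱼ(2+3bⱼ))` has modulus at most
`(51/20)ⁿ`. -/
theorem stmt_2 (n : ℕ) (b : Fin n → Fin 3) :
    ‖∑ x ∈ (univ : Finset (Fin n → Fin 3)).filter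
        (fun x => 3 ∣ ∑ j, (x j : ℕ)),
      Complex.exp ((2 * (Real.pi : ℂ) * Complex.I / 9) *
        (∑ j, ((x j : ℕ) : ℂ) * (2 + 3 * ((b j : ℕ) : ℂ))))‖
      ≤ (51 / 20 : ℝ) ^ n := by
  set A : ℂ := ∑ x ∈ (univ : Finset (Fin n → Fin 3)).filter
        (fun x => 3 ∣ ∑ j, (x j : ℕ)),
      Complex.exp ((2 * (Real.pi : ℂ) * Complex.I / 9) *
        (∑ j, ((x j : ℕ) : ℂ) * (2 + 3 * ((b j : ℕ) : ℂ)))) with hA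
  have key : (3 : ℂ) * A = ∑ k : Fin 3, ∏ j, ∑ v : Fin 3,
      mxgZeta ^ ((v : ℕ) * (2 + 3 * ((b j : ℕ) + (k : ℕ)))) := by
    rw [hA, Finset.sum_filter, Finset.mul_sum]
    have step1 : ∀ x : Fin n → Fin 3,
        (3 : ℂ) * (if 3 ∣ ∑ j, (x j : ℕ) then
            Complex.exp ((2 * (Real.pi : ℂ) * Complex.I / 9) *
              (∑ j, ((x j : ℕ) : ℂ) * (2 + 3 * ((b j : ℕ) : ℂ)))) else 0)
          = ∑ k : Fin 3, ∏ j, mxgZeta ^ ((x j : ℕ) * (2 + 3 * ((b j : ℕ) + (k : ℕ)))) := by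
      intro x
      have hp : ∀ k : Fin 3,
          (∏ j, mxgZeta ^ ((x j : ℕ) * (2 + 3 * ((b j : ℕ) + (k : ℕ)))))
            = (mxgZeta ^ 3) ^ ((k : ℕ) * ∑ j, (x j : ℕ)) *
              ∏ j, mxgZeta ^ ((x j : ℕ) * (2 + 3 * (b j : ℕ))) := by
        intro k
        have e1 : (mxgZeta ^ 3) ^ ((k : ℕ) * ∑ j, (x j : ℕ))
            = ∏ j, mxgZeta ^ (3 * (k : ℕ) * (x j : ℕ)) := by
          rw [Finset.prod_pow_eq_pow_sum, ← pow_mul]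
          congr 1
          rw [← Finset.mul_sum]
          ring
        rw [e1, ← Finset.prod_mul_distrib]
        refine Finset.prod_congr rfl fun j _ => ?_
        rw [← pow_add]
        congr 1
        ring
      rw [Finset.sum_congr rfl fun k _ => hp k, ← Finset.sum_mul, mxg_indic, mxg_exp_eq]
      split_ifs with h
      · ring
      · ring
    rw [Finset.sum_congr rfl fun x _ => step1 x, Finset.sum_comm]
    refine Finset.sum_congr rfl fun k _ => ?_
    rw [Finset.prod_univ_sum (fun _ => (univ : Finset (Fin 3)))
      (fun j v => mxgZeta ^ ((v : ℕ) * (2 + 3 * ((b j : ℕ) + (k : ℕ))))),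
      Fintype.piFinset_univ]
  have hbound : ‖(3 : ℂ) * A‖ ≤ 3 * (51 / 20 : ℝ) ^ n := by
    rw [key]
    calc ‖∑ k : Fin 3, ∏ j, ∑ v : Fin 3,
          mxgZeta ^ ((v : ℕ) * (2 + 3 * ((b j : ℕ) + (k : ℕ))))‖
        ≤ ∑ k : Fin 3, ‖∏ j, ∑ v : Fin 3,
          mxgZeta ^ ((v : ℕ) * (2 + 3 * ((b j : ℕ) + (k : ℕ))))‖ :=
          norm_sum_le _ _
      _ ≤ ∑ _k : Fin 3, (51 / 20 : ℝ) ^ n := by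
          refine Finset.sum_le_sum fun k _ => ?_
          rw [Complex.norm_prod]
          calc (∏ j, ‖∑ v : Fin 3,
                mxgZeta ^ ((v : ℕ) * (2 + 3 * ((b j : ℕ) + (k : ℕ))))‖)
              ≤ ∏ _j : Fin n, (51 / 20 : ℝ) := by
                refine Finset.prod_le_prod (fun j _ => by positivity) fun j _ => ?_
                exact mxg_inner ((b j : ℕ) + (k : ℕ))
                  (by have := (b j).is_le; have := k.is_le; omega)
            _ = (51 / 20 : ℝ) ^ n := by
                rw [Finset.prod_const, Finset.card_univ, Fintype.card_fin]
      _ = 3 * (51 / 20 : ℝ) ^ n := by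
          rw [Finset.sum_const, Finset.card_univ, Fintype.card_fin]
          push_cast
          ring
  have h3 : ‖(3 : ℂ) * A‖ = 3 * ‖A‖ := by
    rw [norm_mul]
    norm_num
  rw [h3] at hbound
  linarith
end

section
/- For every n ≥ 1 and every c ∈ {0, 1, 2}, the number of strings x ∈ {0,1,2}ⁿ whose integer coordinate sum W(x) = Σⱼ xⱼ is divisible by 3 and satisfies (W(x)/3) ≡ c (mod 3) is at most 3^{n−1} · ( 1/3 + (17/20)ⁿ ). -/
open Finset
noncomputable def ζ : ℂ := Complex.exp (2 * Real.pi * Complex.I / 9)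

lemma hprim : IsPrimitiveRoot ζ 9 := by
  have h := Complex.isPrimitiveRoot_exp 9 (by norm_num)
  convert h using 3
  simp [ζ]

lemma hζ9 : ζ ^ 9 = 1 := hprim.pow_eq_one

lemma habsζ : ‖ζ‖ = 1 := by
  rw [ζ, Complex.norm_exp]
  have : (2 * (Real.pi:ℂ) * Complex.I / 9).re = 0 := by simp [Complex.div_re]
  rw [this, Real.exp_zero]

lemma sum_zeta_pow (m : ℕ) : ∑ k ∈ range 9, ζ ^ (k * m) = if 9 ∣ m then 9 else 0 := by
  have hrw : ∀ k, ζ ^ (k * m) = (ζ ^ m) ^ k := fun k => by rw [← pow_mul, mul_comm]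
  simp_rw [hrw]
  by_cases h : 9 ∣ m
  · obtain ⟨t, rfl⟩ := h
    simp [pow_mul, hζ9]
  · rw [if_neg h]
    have hne : ζ ^ m ≠ 1 := fun h1 => h (hprim.pow_eq_one_iff_dvd m |>.mp h1)
    rw [geom_sum_eq hne]
    have : (ζ ^ m) ^ 9 = 1 := by rw [← pow_mul, mul_comm, pow_mul, hζ9, one_pow]
    rw [this]
    simp


lemma hterm (n k : ℕ) : ((1 : ℂ) + ζ ^ k + ζ ^ (2 * k)) ^ n
    = ∑ x : Fin n → Fin 3, ζ ^ (k * ∑ j, (x j : ℕ)) := by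
  have h3 : ((1 : ℂ) + ζ ^ k + ζ ^ (2 * k)) = ∑ a : Fin 3, ζ ^ (k * (a : ℕ)) := by
    rw [Fin.sum_univ_three]
    norm_num [mul_comm]
  rw [h3, Fintype.sum_pow]
  refine Finset.sum_congr rfl fun x _ => ?_
  rw [Finset.mul_sum]
  rw [Finset.prod_pow_eq_pow_sum]

lemma key (n c : ℕ) (hc : c < 3) :
    (9 : ℂ) * ((univ.filter (fun x : Fin n → Fin 3 =>
        (∑ j, (x j : ℕ)) % 9 = 3 * c)).card : ℂ)
      = ∑ k ∈ range 9, ζ ^ (k * (9 - 3 * c)) * ((1 : ℂ) + ζ ^ k + ζ ^ (2 * k)) ^ n := by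
  have : ∀ k ∈ range 9, ζ ^ (k * (9 - 3 * c)) * ((1 : ℂ) + ζ ^ k + ζ ^ (2 * k)) ^ n
      = ∑ x : Fin n → Fin 3, ζ ^ (k * ((∑ j, (x j : ℕ)) + (9 - 3 * c))) := by
    intro k _
    rw [hterm n k, Finset.mul_sum]
    refine Finset.sum_congr rfl fun x _ => ?_
    rw [← pow_add]
    congr 1
    ring
  rw [Finset.sum_congr rfl this, Finset.sum_comm]
  have : ∀ x ∈ (univ : Finset (Fin n → Fin 3)), ∑ k ∈ range 9, ζ ^ (k * ((∑ j, (x j : ℕ)) + (9 - 3 * c)))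
      = if (∑ j, (x j : ℕ)) % 9 = 3 * c then (9 : ℂ) else 0 := by
    intro x _
    rw [sum_zeta_pow]
    congr 1
    simp only [eq_iff_iff]
    omega
  rw [Finset.sum_congr rfl this, Finset.sum_ite, Finset.sum_const, Finset.sum_const_zero,
    add_zero, nsmul_eq_mul, mul_comm]


lemma abs_exp_sub_one_sq (θ : ℝ) :
    ‖Complex.exp ((θ : ℂ) * Complex.I) - 1‖ ^ 2 = 2 - 2 * Real.cos θ := by
  rw [Complex.sq_norm, Complex.normSq_apply]
  simp only [Complex.sub_re, Complex.sub_im, Complex.exp_ofReal_mul_I_re,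
    Complex.exp_ofReal_mul_I_im, Complex.one_re, Complex.one_im, sub_zero]
  nlinarith [Real.sin_sq_add_cos_sq θ]

lemma zeta_pow_exp (k : ℕ) : ζ ^ k = Complex.exp (((2 * Real.pi * k / 9 : ℝ) : ℂ) * Complex.I) := by
  rw [ζ, ← Complex.exp_nat_mul]
  congr 1
  push_cast
  ring

lemma abs_w_sub_one (k : ℕ) (hk : ¬ (3 ∣ k)) :
    ‖ζ ^ (3 * k) - 1‖ ^ 2 = 3 := by
  set w : ℂ := ζ ^ (3 * k) with hw
  have hw3 : w ^ 3 = 1 := by rw [hw, ← pow_mul]; rw [show 3 * k * 3 = 9 * k by ring, pow_mul, hζ9, one_pow]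
  have hwne : w ≠ 1 := by
    rw [hw, Ne, hprim.pow_eq_one_iff_dvd]
    omega
  have habsw : ‖w‖ = 1 := by rw [hw, norm_pow, habsζ, one_pow]
  have hconj : (starRingEnd ℂ) w = w ^ 2 := by
    have h1 : w * (starRingEnd ℂ) w = 1 := by
      rw [Complex.mul_conj]
      norm_cast
      rw [Complex.normSq_eq_norm_sq, habsw]; norm_num
    have h2 : w * w ^ 2 = 1 := by rw [← pow_succ']; exact hw3
    calc (starRingEnd ℂ) w = (starRingEnd ℂ) w * (w * w ^ 2) := by rw [h2, mul_one]
      _ = (w * (starRingEnd ℂ) w) * w ^ 2 := by ring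
      _ = w ^ 2 := by rw [h1, one_mul]
  have hsum : 1 + w + w ^ 2 = 0 := by
    have : (w - 1) * (1 + w + w ^ 2) = 0 := by rw [show (w-1)*(1+w+w^2) = w^3 - 1 by ring, hw3, sub_self]
    rcases mul_eq_zero.mp this with h | h
    · exact absurd (sub_eq_zero.mp h) hwne
    · exact h
  have hC : (w - 1) * (starRingEnd ℂ) (w - 1) = 3 := by
    rw [map_sub, map_one, hconj]
    rw [show (w - 1) * (w ^ 2 - 1) = w ^ 3 + 2 - (1 + w + w ^ 2) - (0:ℂ) by ring, hw3, hsum]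
    ring
  rw [Complex.mul_conj] at hC
  rw [Complex.sq_norm]
  exact_mod_cast hC

lemma abs_s_sq (k : ℕ) (hk : ¬ (3 ∣ k)) :
    ‖(1 : ℂ) + ζ ^ k + ζ ^ (2 * k)‖ ^ 2 * (2 - 2 * Real.cos (2 * Real.pi * k / 9)) = 3 := by
  have hfac : ((1 : ℂ) + ζ ^ k + ζ ^ (2 * k)) * (ζ ^ k - 1) = ζ ^ (3 * k) - 1 := by
    rw [show 2 * k = k * 2 by ring, show 3 * k = k * 3 by ring, pow_mul, pow_mul]
    ring
  have habs2 : ‖ζ ^ k - 1‖ ^ 2 = 2 - 2 * Real.cos (2 * Real.pi * k / 9) := by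
    rw [zeta_pow_exp k, abs_exp_sub_one_sq]
  have := congrArg (fun z => ‖z‖ ^ 2) hfac
  simp only [norm_mul, mul_pow] at this
  rw [habs2] at this
  rw [this, abs_w_sub_one k hk]


lemma pi_lb : (3.141592 : ℝ) < Real.pi := Real.pi_gt_d6
lemma pi_ub : Real.pi < 3.141593 := Real.pi_lt_d6

lemma cos1 : Real.cos (2 * Real.pi * 1 / 9) ≤ 10 / 13 := by
  set x : ℝ := 2 * Real.pi * 1 / 9 with hx
  have hxl : (0.698131 : ℝ) ≤ x := by rw [hx]; nlinarith [pi_lb]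
  have hxu : x ≤ (0.698132 : ℝ) := by rw [hx]; nlinarith [pi_ub]
  have hb := Real.cos_bound (x := x) (by rw [abs_of_nonneg (by linarith)]; linarith)
  rw [abs_sub_le_iff] at hb
  have h1 := hb.1
  rw [abs_of_nonneg (by linarith : (0:ℝ) ≤ x)] at h1
  have hx2 : (0.698131 : ℝ)^2 ≤ x^2 := pow_le_pow_left₀ (by norm_num) hxl 2
  have hx4 : x^4 ≤ (0.698132 : ℝ)^4 := pow_le_pow_left₀ (by linarith) hxu 4
  norm_num at hx2 hx4 ⊢
  linarith

lemma cos2 : Real.cos (2 * Real.pi * 2 / 9) ≤ 43 / 243 := by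
  have h : Real.cos (2 * Real.pi * 2 / 9) = Real.sin (Real.pi / 18) := by
    rw [← Real.sin_pi_div_two_sub]
    congr 1
    ring
  rw [h]
  set y : ℝ := Real.pi / 18 with hy
  have hyl : (0.174532 : ℝ) ≤ y := by rw [hy]; nlinarith [pi_lb]
  have hyu : y ≤ (0.174533 : ℝ) := by rw [hy]; nlinarith [pi_ub]
  have hb := Real.sin_bound (x := y) (by rw [abs_of_nonneg (by linarith)]; linarith)
  rw [abs_sub_le_iff] at hb
  have h1 := hb.1
  rw [abs_of_nonneg (by linarith : (0:ℝ) ≤ y)] at h1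
  have hy5 : y^5 ≤ 1 := pow_le_one₀ (by linarith) (by linarith)
  have hy3 : 0 ≤ y^3 := by positivity
  nlinarith [sq_nonneg y, sq_nonneg (y^2), hy5, hy3]

lemma cos4 : Real.cos (2 * Real.pi * 4 / 9) ≤ -(907 / 968) := by
  have h : (2 : ℝ) * Real.pi * 4 / 9 = Real.pi - Real.pi / 9 := by ring
  rw [h, Real.cos_pi_sub, neg_le_neg_iff]
  set z : ℝ := Real.pi / 9 with hz
  have hzl : (0.349065 : ℝ) ≤ z := by rw [hz]; nlinarith [pi_lb]
  have hzu : z ≤ (0.349066 : ℝ) := by rw [hz]; nlinarith [pi_ub]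
  have hb := Real.cos_bound (x := z) (by rw [abs_of_nonneg (by linarith)]; linarith)
  rw [abs_sub_le_iff] at hb
  have h2 := hb.2
  rw [abs_of_nonneg (by linarith : (0:ℝ) ≤ z)] at h2
  have hz2 : z^2 ≤ (0.349066 : ℝ)^2 := pow_le_pow_left₀ (by linarith) hzu 2
  have hz4 : z^4 ≤ (0.349066 : ℝ)^4 := pow_le_pow_left₀ (by linarith) hzu 4
  norm_num at hz2 hz4 ⊢
  linarith

lemma cos8 : Real.cos (2 * Real.pi * 8 / 9) ≤ 10 / 13 := by
  have h : (2:ℝ) * Real.pi * 8 / 9 = 2 * Real.pi - 2 * Real.pi * 1 / 9 := by ring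
  rw [h, Real.cos_two_pi_sub]
  exact cos1

lemma cos7 : Real.cos (2 * Real.pi * 7 / 9) ≤ 43 / 243 := by
  have h : (2:ℝ) * Real.pi * 7 / 9 = 2 * Real.pi - 2 * Real.pi * 2 / 9 := by ring
  rw [h, Real.cos_two_pi_sub]
  exact cos2

lemma cos5 : Real.cos (2 * Real.pi * 5 / 9) ≤ -(907 / 968) := by
  have h : (2:ℝ) * Real.pi * 5 / 9 = 2 * Real.pi - 2 * Real.pi * 4 / 9 := by ring
  rw [h, Real.cos_two_pi_sub]
  exact cos4


lemma abs_s_le (k : ℕ) (h3 : ¬ (3 ∣ k)) (B : ℝ) (hB : 0 < B)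
    (hcos : Real.cos (2 * Real.pi * k / 9) ≤ 1 - 3 / (2 * B)) :
    ‖(1 : ℂ) + ζ ^ k + ζ ^ (2 * k)‖ ^ 2 ≤ B := by
  have h := abs_s_sq k h3
  set a := ‖(1 : ℂ) + ζ ^ k + ζ ^ (2 * k)‖ with ha
  set d := 2 - 2 * Real.cos (2 * Real.pi * k / 9) with hd
  have hdge : 3 / B ≤ d := by
    rw [hd]
    have : 3 / B = 2 * (3 / (2 * B)) := by field_simp
    linarith
  have hdpos : 0 < d := lt_of_lt_of_le (by positivity) hdge
  have ha2 : a ^ 2 = 3 / d := by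
    field_simp
    linarith [h]
  rw [ha2, div_le_iff₀ hdpos]
  calc (3 : ℝ) = B * (3 / B) := by field_simp
    _ ≤ B * d := mul_le_mul_of_nonneg_left hdge hB.le

lemma pow_le_B (a B : ℝ) (ha : 0 ≤ a) (hB : a ^ 2 ≤ B) (hBq : B ≤ (51/20 : ℝ) ^ 2)
    (n : ℕ) (hn : 2 ≤ n) : a ^ n ≤ B * (51/20 : ℝ) ^ (n - 2) := by
  have haq : a ≤ 51/20 := by nlinarith
  calc a ^ n = a ^ 2 * a ^ (n - 2) := by rw [← pow_add]; congr 1; omega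
    _ ≤ B * (51/20 : ℝ) ^ (n - 2) :=
        mul_le_mul hB (pow_le_pow_left₀ ha haq _) (pow_nonneg ha _) (le_trans (sq_nonneg a) hB)

lemma szero3 : ((1 : ℂ) + ζ ^ 3 + ζ ^ (2 * 3)) = 0 := by
  have hw3 : (ζ ^ 3) ^ 3 = 1 := by rw [← pow_mul]; exact hζ9
  have hwne : ζ ^ 3 ≠ 1 := by rw [Ne, hprim.pow_eq_one_iff_dvd]; omega
  have hfac : (ζ ^ 3 - 1) * (1 + ζ ^ 3 + ζ ^ (2 * 3)) = (ζ ^ 3) ^ 3 - 1 := by ring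
  rw [hw3, sub_self] at hfac
  rcases mul_eq_zero.mp hfac with h | h
  · exact absurd (sub_eq_zero.mp h) hwne
  · exact h

lemma szero6 : ((1 : ℂ) + ζ ^ 6 + ζ ^ (2 * 6)) = 0 := by
  have h12 : ζ ^ (2 * 6) = ζ ^ 3 := by
    rw [show 2 * 6 = 9 + 3 from rfl, pow_add, hζ9, one_mul]
  rw [h12]
  have := szero3
  rw [show 2 * 3 = 6 from rfl] at this
  linear_combination this

theorem main_ge2 (n : ℕ) (hn : 2 ≤ n) (c : ℕ) (hc : c < 3) :
    (((univ : Finset (Fin n → Fin 3)).filter (fun x =>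
        (∑ j, (x j : ℕ)) % 9 = 3 * c)).card : ℝ)
      ≤ (3 : ℝ) ^ (n - 1) * (1 / 3 + (17 / 20) ^ n) := by
  set N : ℕ := ((univ : Finset (Fin n → Fin 3)).filter (fun x =>
        (∑ j, (x j : ℕ)) % 9 = 3 * c)).card with hN
  set f : ℕ → ℂ := fun k => ζ ^ (k * (9 - 3 * c)) * ((1 : ℂ) + ζ ^ k + ζ ^ (2 * k)) ^ n with hf
  have hkey := key n c hc
  have hsplit : ∑ k ∈ range 9, f k = f 0 + ∑ k ∈ Ico 1 9, f k := by
    rw [range_eq_Ico, Finset.sum_eq_sum_Ico_succ_bot (by norm_num)]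
  have hf0 : f 0 = 3 ^ n := by
    simp only [hf, Nat.zero_mul, Nat.mul_zero, pow_zero, one_mul]
    norm_num
  have hE : ((9 * (N : ℝ) - 3 ^ n : ℝ) : ℂ) = ∑ k ∈ Ico 1 9, f k := by
    push_cast
    rw [hkey, hsplit, hf0]
    ring
  have habsle : 9 * (N : ℝ) - 3 ^ n ≤ ‖∑ k ∈ Ico 1 9, f k‖ := by
    rw [← hE, Complex.norm_real, Real.norm_eq_abs]
    exact le_abs_self _
  have hsumabs : ‖∑ k ∈ Ico 1 9, f k‖ ≤
      ∑ k ∈ Ico 1 9, ‖(1 : ℂ) + ζ ^ k + ζ ^ (2 * k)‖ ^ n := by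
    refine le_trans (norm_sum_le _ _) (Finset.sum_le_sum fun k _ => ?_)
    rw [hf]
    simp only [norm_mul, norm_pow, habsζ, one_pow, one_mul]
    exact le_refl _
  -- expand the sum
  set g : ℕ → ℝ := fun k => ‖(1 : ℂ) + ζ ^ k + ζ ^ (2 * k)‖ ^ n with hg
  have hexp : ∑ k ∈ Ico 1 9, g k = g 1 + g 2 + g 3 + g 4 + g 5 + g 6 + g 7 + g 8 := by
    rw [show (9:ℕ) = 8 + 1 from rfl, Finset.sum_Ico_succ_top (by norm_num),
      Finset.sum_Ico_succ_top (by norm_num), Finset.sum_Ico_succ_top (by norm_num),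
      Finset.sum_Ico_succ_top (by norm_num), Finset.sum_Ico_succ_top (by norm_num),
      Finset.sum_Ico_succ_top (by norm_num), Finset.sum_Ico_succ_top (by norm_num),
      Finset.sum_Ico_succ_top (by norm_num), Finset.Ico_self, Finset.sum_empty]
    ring
  have hn0 : n ≠ 0 := Nat.one_le_iff_ne_zero.mp (le_trans one_le_two hn)
  have hg3 : g 3 = 0 := by rw [hg]; simp only [szero3, norm_zero]; exact zero_pow hn0
  have hg6 : g 6 = 0 := by rw [hg]; simp only [szero6, norm_zero]; exact zero_pow hn0
  have hB1 : ∀ k ∈ ({1, 8} : Finset ℕ), g k ≤ 13/2 * (51/20 : ℝ) ^ (n - 2) := by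
    intro k hk
    fin_cases hk <;>
    · refine pow_le_B _ _ (norm_nonneg _) ?_ (by norm_num) n hn
      refine abs_s_le _ (by norm_num) _ (by norm_num) ?_
      push_cast
      first
        | (have := cos1; norm_num at this ⊢; linarith)
        | (have := cos8; norm_num at this ⊢; linarith)
  have hB2 : ∀ k ∈ ({2, 7} : Finset ℕ), g k ≤ 729/400 * (51/20 : ℝ) ^ (n - 2) := by
    intro k hk
    fin_cases hk <;>
    · refine pow_le_B _ _ (norm_nonneg _) ?_ (by norm_num) n hn
      refine abs_s_le _ (by norm_num) _ (by norm_num) ?_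
      push_cast
      first
        | (have := cos2; norm_num at this ⊢; linarith)
        | (have := cos7; norm_num at this ⊢; linarith)
  have hB4 : ∀ k ∈ ({4, 5} : Finset ℕ), g k ≤ 484/625 * (51/20 : ℝ) ^ (n - 2) := by
    intro k hk
    fin_cases hk <;>
    · refine pow_le_B _ _ (norm_nonneg _) ?_ (by norm_num) n hn
      refine abs_s_le _ (by norm_num) _ (by norm_num) ?_
      push_cast
      first
        | (have := cos4; norm_num at this ⊢; linarith)
        | (have := cos5; norm_num at this ⊢; linarith)
  have hq : (0:ℝ) ≤ (51/20 : ℝ) ^ (n - 2) := by positivity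
  have h51 : ((51:ℝ)/20) ^ n = (51/20 : ℝ)^2 * (51/20 : ℝ) ^ (n - 2) := by
    rw [← pow_add, Nat.add_sub_cancel' hn]
  have h9 : 9 * (N : ℝ) ≤ 3 ^ n + 3 * (51/20 : ℝ) ^ n := by
    have e1 := hB1 1 (by norm_num)
    have e8 := hB1 8 (by norm_num)
    have e2 := hB2 2 (by norm_num)
    have e7 := hB2 7 (by norm_num)
    have e4 := hB4 4 (by norm_num)
    have e5 := hB4 5 (by norm_num)
    have := le_trans habsle (le_trans hsumabs (le_of_eq hexp))
    rw [h51]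
    nlinarith [this]
  have hfin : (3:ℝ)^(n-1) * (1/3 + (17/20 : ℝ)^n) = (3^n + 3*(51/20 : ℝ)^n)/9 := by
    have h3 : (3:ℝ)^(n-1) * 3 = 3^n := by rw [← pow_succ, Nat.sub_add_cancel (le_trans one_le_two hn)]
    have h17 : (3:ℝ)^n * (17/20 : ℝ)^n = (51/20 : ℝ)^n := by rw [← mul_pow]; norm_num
    rw [← h17, ← h3]
    ring
  rw [hfin]
  linarith

/-- Counting bound for the ternary Modular XOR game `G₃`: for every `c ∈ {0,1,2}`, the
number of ternary strings `x ∈ {0,1,2}ⁿ` whose coordinate sum `W(x)` is divisible by `3`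
and satisfies `(W(x)/3) ≡ c (mod 3)` is at most `3^{n-1}·(1/3 + (17/20)ⁿ)`. -/
theorem stmt_3 (n : ℕ) (hn : 1 ≤ n) (c : ℕ) (hc : c < 3) :
    (((univ : Finset (Fin n → Fin 3)).filter (fun x =>
        3 ∣ (∑ j, (x j : ℕ)) ∧ (∑ j, (x j : ℕ)) / 3 % 3 = c)).card : ℝ)
      ≤ (3 : ℝ) ^ (n - 1) * (1 / 3 + (17 / 20) ^ n) := by
  rcases Nat.lt_or_ge n 2 with h2 | h2
  · -- n = 1
    have hn1 : n = 1 := by omega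
    subst hn1
    have hcard : ((univ : Finset (Fin 1 → Fin 3)).filter (fun x =>
        3 ∣ (∑ j, (x j : ℕ)) ∧ (∑ j, (x j : ℕ)) / 3 % 3 = c)).card ≤ 1 := by
      interval_cases c <;> decide
    have : (((univ : Finset (Fin 1 → Fin 3)).filter (fun x =>
        3 ∣ (∑ j, (x j : ℕ)) ∧ (∑ j, (x j : ℕ)) / 3 % 3 = c)).card : ℝ) ≤ 1 := by
      exact_mod_cast hcard
    calc _ ≤ (1:ℝ) := this
      _ ≤ _ := by norm_num
  · have hfil : ((univ : Finset (Fin n → Fin 3)).filter (fun x =>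
        3 ∣ (∑ j, (x j : ℕ)) ∧ (∑ j, (x j : ℕ)) / 3 % 3 = c))
        = ((univ : Finset (Fin n → Fin 3)).filter (fun x =>
        (∑ j, (x j : ℕ)) % 9 = 3 * c)) := by
      apply Finset.filter_congr
      intro x _
      constructor
      · intro ⟨h1, h2⟩; omega
      · intro h; omega
    rw [hfil]
    exact main_ge2 n h2 c hc
end

section
/- For every n ≥ 0 and every b : {1, …, n} → {0, 1, 2}, the exponential sum over all pairs of binary strings u, v ∈ {0,1}ⁿ whose combined integer sum Σⱼ (uⱼ + vⱼ) is divisible by 3 satisfies | Σ_{(u,v) : 3 ∣ Σⱼ(uⱼ+vⱼ)} exp( (2πi/9) · Σ_{j=1}^{n} (uⱼ + vⱼ)(2 + 3 bⱼ) ) | ≤ (89/25)ⁿ, where uⱼ, vⱼ and bⱼ are treated as integers in the exponent. -/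
open Finset


/-- cos(2π/9) ≤ 39/50, via the triple-angle identity. -/
lemma stmt4_cos29 : Real.cos (2 * Real.pi / 9) ≤ 39 / 50 := by
  have h3 : Real.cos (3 * (2 * Real.pi / 9)) =
      4 * Real.cos (2 * Real.pi / 9) ^ 3 - 3 * Real.cos (2 * Real.pi / 9) :=
    Real.cos_three_mul _
  have h23 : (3 : ℝ) * (2 * Real.pi / 9) = Real.pi - Real.pi / 3 := by ring
  rw [h23, Real.cos_pi_sub, Real.cos_pi_div_three] at h3
  set c := Real.cos (2 * Real.pi / 9) with hc
  have hc1 : c ≤ 1 := Real.cos_le_one _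
  nlinarith [sq_nonneg (c - 39 / 50), sq_nonneg (c + 1), sq_nonneg c]

lemma stmt4_keycos (t : ℕ) (ht : t ≤ 4) :
    Real.cos (2 * Real.pi * (2 + 3 * (t : ℝ)) / 9) ≤ 39 / 50 := by
  have pi_pos := Real.pi_pos
  have case0 : Real.cos (2 * Real.pi * (2 + 3 * (0:ℝ)) / 9) ≤ 39 / 50 := by
    have h1 : Real.cos (2 * Real.pi * (2 + 3 * (0:ℝ)) / 9) ≤ Real.cos (Real.pi / 3) := by
      apply Real.cos_le_cos_of_nonneg_of_le_pi (by positivity) (by nlinarith) (by nlinarith)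
    rw [Real.cos_pi_div_three] at h1; linarith
  have case1 : Real.cos (2 * Real.pi * (2 + 3 * (1:ℝ)) / 9) ≤ 39 / 50 := by
    have h1 : 2 * Real.pi * (2 + 3 * (1:ℝ)) / 9 = Real.pi - (-(Real.pi / 9)) := by ring
    rw [h1, Real.cos_pi_sub, Real.cos_neg]
    have : 0 ≤ Real.cos (Real.pi / 9) :=
      Real.cos_nonneg_of_mem_Icc ⟨by nlinarith, by nlinarith⟩
    linarith
  have case2 : Real.cos (2 * Real.pi * (2 + 3 * (2:ℝ)) / 9) ≤ 39 / 50 := by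
    have h1 : 2 * Real.pi * (2 + 3 * (2:ℝ)) / 9 = 2 * Real.pi - 2 * Real.pi / 9 := by ring
    rw [h1, Real.cos_two_pi_sub]; exact stmt4_cos29
  interval_cases t
  · simpa using case0
  · simpa using case1
  · simpa using case2
  · have h1 : 2 * Real.pi * (2 + 3 * ((3:ℕ) : ℝ)) / 9
        = 2 * Real.pi * (2 + 3 * (0:ℝ)) / 9 + 2 * Real.pi := by push_cast; ring
    rw [h1, Real.cos_add_two_pi]; exact case0
  · have h1 : 2 * Real.pi * (2 + 3 * ((4:ℕ) : ℝ)) / 9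
        = 2 * Real.pi * (2 + 3 * (1:ℝ)) / 9 + 2 * Real.pi := by push_cast; ring
    rw [h1, Real.cos_add_two_pi]; exact case1

lemma stmt4_absfac (θ : ℝ) :
    ‖1 + Complex.exp (θ * Complex.I)‖ ^ 2 = 2 + 2 * Real.cos θ := by
  rw [Complex.exp_mul_I, Complex.sq_norm, ← Complex.ofReal_cos, ← Complex.ofReal_sin]
  rw [Complex.normSq_apply]
  simp only [Complex.add_re, Complex.add_im, Complex.one_re, Complex.one_im,
    Complex.ofReal_re, Complex.ofReal_im, Complex.mul_re, Complex.mul_im,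
    Complex.I_re, Complex.I_im, mul_zero, mul_one, zero_mul, sub_zero, zero_add, add_zero]
  nlinarith [Real.sin_sq_add_cos_sq θ]
open Finset

lemma stmt4_ind (S : ℕ) :
    (∑ k ∈ Finset.range 3, Complex.exp (2 * (Real.pi : ℂ) * Complex.I * S / 3) ^ k)
      = if 3 ∣ S then 3 else 0 := by
  split_ifs with h
  · obtain ⟨m, hm⟩ := h
    have hx : Complex.exp (2 * (Real.pi : ℂ) * Complex.I * S / 3) = 1 := by
      have : 2 * (Real.pi : ℂ) * Complex.I * S / 3 = (m : ℂ) * (2 * Real.pi * Complex.I) := by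
        subst hm; push_cast; ring
      rw [this]
      simpa using Complex.exp_int_mul_two_pi_mul_I (m : ℤ)
    simp [hx]
  · have hx3 : Complex.exp (2 * (Real.pi : ℂ) * Complex.I * S / 3) ^ 3 = 1 := by
      rw [← Complex.exp_nat_mul]
      have h1 : (3 : ℕ) * (2 * (Real.pi : ℂ) * Complex.I * S / 3)
          = (S : ℂ) * (2 * Real.pi * Complex.I) := by push_cast; ring
      rw [h1]
      simpa using Complex.exp_int_mul_two_pi_mul_I (S : ℤ)
    have hx1 : Complex.exp (2 * (Real.pi : ℂ) * Complex.I * S / 3) ≠ 1 := by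
      rw [Ne, Complex.exp_eq_one_iff]
      rintro ⟨m, hm⟩
      apply h
      have hne : (2 * (Real.pi : ℂ) * Complex.I) ≠ 0 := by
        simp [Real.pi_ne_zero, Complex.I_ne_zero, Complex.ofReal_ne_zero]
      have h2 : (2 * (Real.pi : ℂ) * Complex.I) * ((S : ℂ) / 3)
          = (2 * (Real.pi : ℂ) * Complex.I) * (m : ℂ) := by
        linear_combination hm
      have h3 : (S : ℂ) / 3 = (m : ℂ) := mul_left_cancel₀ hne h2
      have h4 : (S : ℂ) = 3 * (m : ℂ) := by field_simp at h3; linear_combination h3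
      have h5 : (S : ℤ) = 3 * m := by exact_mod_cast h4
      exact ⟨m.toNat, by omega⟩
    rw [geom_sum_eq hx1, hx3]
    simp
open Finset


/-- Exponential-sum bound for the ternary Modular XOR game under the Hamming
(bit-to-trit) encoding: for every shift vector `b`, the sum over pairs of binary strings
`(u,v)` with `3 ∣ Σⱼ (uⱼ + vⱼ)` of `exp((2πi/9)·Σⱼ (uⱼ+vⱼ)(2+3bⱼ))` has modulus at most
`(89/25)ⁿ`. -/
theorem stmt_4 (n : ℕ) (b : Fin n → Fin 3) :
    ‖(∑ uv ∈ (univ : Finset ((Fin n → Fin 2) × (Fin n → Fin 2))).filter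
        (fun uv => 3 ∣ ∑ j, ((uv.1 j : ℕ) + (uv.2 j : ℕ))),
      Complex.exp ((2 * (Real.pi : ℂ) * Complex.I / 9) *
        (∑ j, (((uv.1 j : ℕ) : ℂ) + ((uv.2 j : ℕ) : ℂ)) * (2 + 3 * ((b j : ℕ) : ℂ)))))‖
      ≤ (89 / 25 : ℝ) ^ n := by
  classical
  set C : ℂ := 2 * (Real.pi : ℂ) * Complex.I / 9 with hC
  set w : Fin n → ℕ → ℂ :=
    fun j k => Complex.exp (C * (2 + 3 * ((b j : ℕ) : ℂ) + 3 * (k : ℂ))) with hw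
  have step1 : ∀ uv : (Fin n → Fin 2) × (Fin n → Fin 2),
      (if 3 ∣ ∑ j, ((uv.1 j : ℕ) + (uv.2 j : ℕ)) then
        Complex.exp (C * ∑ j, (((uv.1 j : ℕ) : ℂ) + ((uv.2 j : ℕ) : ℂ)) * (2 + 3 * ((b j : ℕ) : ℂ)))
      else 0)
      = (1/3 : ℂ) * ∑ k ∈ Finset.range 3,
          Complex.exp (C * ∑ j, (((uv.1 j : ℕ) : ℂ) + ((uv.2 j : ℕ) : ℂ))
            * (2 + 3 * ((b j : ℕ) : ℂ) + 3 * (k : ℂ))) := by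
    intro uv
    have hS : (((∑ j, ((uv.1 j : ℕ) + (uv.2 j : ℕ))) : ℕ) : ℂ)
        = ∑ j, (((uv.1 j : ℕ) : ℂ) + ((uv.2 j : ℕ) : ℂ)) := by push_cast; rfl
    have hterm : ∀ k : ℕ,
        Complex.exp (C * ∑ j, (((uv.1 j : ℕ) : ℂ) + ((uv.2 j : ℕ) : ℂ))
            * (2 + 3 * ((b j : ℕ) : ℂ) + 3 * (k : ℂ)))
        = Complex.exp (C * ∑ j, (((uv.1 j : ℕ) : ℂ) + ((uv.2 j : ℕ) : ℂ)) * (2 + 3 * ((b j : ℕ) : ℂ)))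
          * Complex.exp (2 * (Real.pi : ℂ) * Complex.I
              * ((∑ j, ((uv.1 j : ℕ) + (uv.2 j : ℕ)) : ℕ) : ℂ) / 3) ^ k := by
      intro k
      rw [← Complex.exp_nat_mul, ← Complex.exp_add]
      congr 1
      have hsplit : ∑ j, (((uv.1 j : ℕ) : ℂ) + ((uv.2 j : ℕ) : ℂ))
            * (2 + 3 * ((b j : ℕ) : ℂ) + 3 * (k : ℂ))
          = (∑ j, (((uv.1 j : ℕ) : ℂ) + ((uv.2 j : ℕ) : ℂ)) * (2 + 3 * ((b j : ℕ) : ℂ)))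
            + 3 * (k : ℂ) * ∑ j, (((uv.1 j : ℕ) : ℂ) + ((uv.2 j : ℕ) : ℂ)) := by
        rw [Finset.mul_sum, ← Finset.sum_add_distrib]
        exact Finset.sum_congr rfl fun j _ => by ring
      rw [hsplit, hS, hC]
      ring
    simp only [hterm]
    rw [← Finset.mul_sum, stmt4_ind]
    split_ifs with h
    · ring
    · ring
  have key : (∑ uv ∈ (univ : Finset ((Fin n → Fin 2) × (Fin n → Fin 2))).filter
        (fun uv => 3 ∣ ∑ j, ((uv.1 j : ℕ) + (uv.2 j : ℕ))),
      Complex.exp (C * (∑ j, (((uv.1 j : ℕ) : ℂ) + ((uv.2 j : ℕ) : ℂ)) * (2 + 3 * ((b j : ℕ) : ℂ)))))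
      = (1/3 : ℂ) * ∑ k ∈ Finset.range 3, (∏ j, (1 + w j k)) ^ 2 := by
    rw [Finset.sum_filter]
    rw [Finset.sum_congr rfl fun uv _ => step1 uv]
    rw [← Finset.mul_sum, Finset.sum_comm]
    congr 1
    apply Finset.sum_congr rfl
    intro k _
    have hfac : ∀ uv : (Fin n → Fin 2) × (Fin n → Fin 2),
        Complex.exp (C * ∑ j, (((uv.1 j : ℕ) : ℂ) + ((uv.2 j : ℕ) : ℂ))
            * (2 + 3 * ((b j : ℕ) : ℂ) + 3 * (k : ℂ)))
        = (∏ j, (w j k) ^ ((uv.1 j : ℕ))) * ∏ j, (w j k) ^ ((uv.2 j : ℕ)) := by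
      intro uv
      rw [Finset.mul_sum, Complex.exp_sum, ← Finset.prod_mul_distrib]
      apply Finset.prod_congr rfl
      intro j _
      rw [hw]
      simp only []
      rw [← Complex.exp_nat_mul, ← Complex.exp_nat_mul, ← Complex.exp_add]
      congr 1
      ring
    rw [Finset.sum_congr rfl fun uv _ => hfac uv]
    rw [Fintype.sum_prod_type]
    simp only []
    rw [← Finset.sum_mul_sum]
    have huniv : (∑ u : Fin n → Fin 2, ∏ j, (w j k) ^ ((u j : ℕ))) = ∏ j, (1 + w j k) := by
      rw [← Fintype.prod_sum fun j (x : Fin 2) => (w j k) ^ ((x : ℕ))]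
      apply Finset.prod_congr rfl
      intro j _
      rw [Fin.sum_univ_two]
      simp
    rw [huniv]
    ring
  rw [key, norm_mul]
  have h13 : ‖(1/3 : ℂ)‖ = 1/3 := by simp
  rw [h13]
  have habs : ‖∑ k ∈ Finset.range 3, (∏ j, (1 + w j k)) ^ 2‖
      ≤ ∑ k ∈ Finset.range 3, ‖(∏ j, (1 + w j k)) ^ 2‖ :=
    norm_sum_le _ _
  have hbound : ∀ k ∈ Finset.range 3,
      ‖(∏ j, (1 + w j k)) ^ 2‖ ≤ (89/25 : ℝ) ^ n := by
    intro k hk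
    rw [norm_pow, norm_prod, ← Finset.prod_pow]
    have h89 : ((89:ℝ)/25) ^ n = ∏ _j : Fin n, (89/25 : ℝ) := by simp [div_pow]
    rw [h89]
    apply Finset.prod_le_prod (fun j _ => by positivity)
    intro j _
    have ht : (b j : ℕ) + k ≤ 4 := by
      have h1 := (b j).is_le
      have h2 := Finset.mem_range.mp hk
      omega
    have hangle : C * (2 + 3 * ((b j : ℕ) : ℂ) + 3 * (k : ℂ))
        = ((2 * Real.pi * (2 + 3 * ((((b j : ℕ) + k : ℕ)) : ℝ)) / 9 : ℝ) : ℂ) * Complex.I := by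
      rw [hC]; push_cast; ring
    rw [hw]
    simp only []
    rw [hangle, stmt4_absfac]
    have := stmt4_keycos ((b j : ℕ) + k) ht
    linarith
  have hsum : ∑ k ∈ Finset.range 3, ‖(∏ j, (1 + w j k)) ^ 2‖
      ≤ 3 * (89/25 : ℝ) ^ n := by
    calc ∑ k ∈ Finset.range 3, ‖(∏ j, (1 + w j k)) ^ 2‖
        ≤ ∑ _k ∈ Finset.range 3, (89/25 : ℝ) ^ n := Finset.sum_le_sum hbound
      _ = 3 * (89/25 : ℝ) ^ n := by simp [mul_comm]
  have hp : (0:ℝ) < (89/25 : ℝ) ^ n := by positivity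
  nlinarith [habs, hsum]
end

section
/- Fix an integer p ≥ 1 and a natural number c with c < p. Define the p × p complex matrices X (the shift operator, with entries X_{j,k} = 1 if k ≡ j + 1 (mod p) and 0 otherwise) and R = diag( e^{2πi·j/p²} )_{j=0}^{p−1}. Then ( R · (X^c)† · R† )† = X^c · D, where † denotes the conjugate transpose and D is the diagonal matrix with entries D_{j,j} = e^{−2πi·c/p²} · e^{2πi/p} for the c indices j with j < c, and D_{j,j} = e^{−2πi·c/p²} for the remaining p − c indices. In other words, the uncorrected output of the qupit gate-teleportation gadget with measurement outcome c equals X^c composed with a global Z-rotation GR_Z(−2πc/p²) and a partial Z-rotation GR_Z(2π/p, S) applied on a set S of exactly c computational basis states, followed by the intended rotation R_Z(2π/p²). -/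
/-!
Conjugating `(X^c)†` by the diagonal `R` and taking the adjoint gives `R X^c R†`, whose
only nonzero entries sit at `(j, (j + c) mod p)` and equal `e^{2πi (j - k)/p²}` with
`k = (j + c) mod p`. For `j + c < p` this is `e^{-2πic/p²}` and `k ≥ c`; when `j + c`
wraps around, `k = j + c - p < c` and the extra `p` in `j - k` contributes `e^{2πi/p}`.
-/

open Matrix

theorem Matrix.pow_apply_of_shift {α : Type*} [Semiring α] {p : ℕ}
    {X : Matrix (Fin p) (Fin p) α}
    (hX : ∀ j k : Fin p, X j k = if (k : ℕ) = ((j : ℕ) + 1) % p then 1 else 0)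
    (n : ℕ) (j k : Fin p) :
    (X ^ n) j k = if (k : ℕ) = ((j : ℕ) + n) % p then 1 else 0 := by
  induction n generalizing k with
  | zero => simp [one_apply, Nat.mod_eq_of_lt j.isLt, Fin.ext_iff, eq_comm]
  | succ n ih =>
    let l : Fin p := ⟨((j : ℕ) + n) % p, Nat.mod_lt _ j.pos⟩
    have hsum : (X ^ (n + 1)) j k = X l k := by
      rw [pow_succ, mul_apply, Finset.sum_eq_single l]
      · simp [ih, l]
      · intro i _ hi
        simp [ih, l, Fin.ext_iff.not.mp hi]
      · simp
    rw [hsum, hX, Nat.mod_add_mod, Nat.add_assoc]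

theorem Nat.add_mod_of_lt_of_lt {a b n : ℕ} (ha : a < n) (hb : b < n) :
    (a + b) % n = if a + b < n then a + b else a + b - n := by
  split_ifs with h
  · exact Nat.mod_eq_of_lt h
  · rw [Nat.mod_eq_sub_mod (by omega), Nat.mod_eq_of_lt (by omega)]

theorem Matrix.diagonal_mul_mul_diagonal_apply {n α : Type*} [DecidableEq n] [Fintype n]
    [NonUnitalNonAssocSemiring α] (d e : n → α) (M : Matrix n n α) (j k : n) :
    (diagonal d * M * diagonal e) j k = d j * M j k * e k := by
  rw [mul_diagonal, diagonal_mul]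

theorem Complex.star_exp_two_pi_I_mul_div_sq (m p : ℕ) :
    star (Complex.exp (2 * (Real.pi : ℂ) * Complex.I * (m : ℂ) / (p : ℂ) ^ 2)) =
      Complex.exp (-(2 * (Real.pi : ℂ) * Complex.I * (m : ℂ) / (p : ℂ) ^ 2)) := by
  rw [Complex.star_def, ← Complex.exp_conj]
  congr 1
  simp [map_div₀, Complex.conj_I, map_ofNat]
  ring

theorem stmt_8_general (p : ℕ) (c : ℕ) (hc : c < p)
    (X R D : Matrix (Fin p) (Fin p) ℂ)
    (hX : ∀ j k : Fin p, X j k = if (k : ℕ) = ((j : ℕ) + 1) % p then 1 else 0)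
    (hR : R = Matrix.diagonal fun j : Fin p =>
        Complex.exp (2 * (Real.pi : ℂ) * Complex.I * ((j : ℕ) : ℂ) / (p : ℂ) ^ 2))
    (hD : D = Matrix.diagonal fun j : Fin p =>
        if (j : ℕ) < c then
          Complex.exp (-(2 * (Real.pi : ℂ) * Complex.I * (c : ℂ) / (p : ℂ) ^ 2)) *
            Complex.exp (2 * (Real.pi : ℂ) * Complex.I / (p : ℂ))
        else Complex.exp (-(2 * (Real.pi : ℂ) * Complex.I * (c : ℂ) / (p : ℂ) ^ 2))) :
    (R * (X ^ c)ᴴ * Rᴴ)ᴴ = X ^ c * D := by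
  simp only [conjTranspose_mul, conjTranspose_conjTranspose, ← mul_assoc]
  ext j k
  have hp : (p : ℂ) ≠ 0 := Nat.cast_ne_zero.mpr j.pos.ne'
  rw [hR, hD, diagonal_conjTranspose, diagonal_mul_mul_diagonal_apply, mul_diagonal,
    pow_apply_of_shift hX, Pi.star_apply, Complex.star_exp_two_pi_I_mul_div_sq]
  by_cases hk : (k : ℕ) = ((j : ℕ) + c) % p
  swap
  · simp [hk]
  simp only [if_pos hk, mul_one, one_mul, ← Complex.exp_add]
  rw [Nat.add_mod_of_lt_of_lt j.isLt hc] at hk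
  by_cases hwrap : (j : ℕ) + c < p
  · rw [if_pos hwrap] at hk
    rw [if_neg (by omega), hk]
    congr 1
    push_cast
    field_simp
    ring
  · rw [if_neg hwrap] at hk
    rw [if_pos (by omega), hk, Nat.cast_sub (by omega)]
    congr 1
    push_cast
    field_simp
    ring

/-- The uncorrected output of the qupit gate-teleportation gadget with measurement
outcome `c`: with `X` the generalized Pauli shift on `ℂ^p` and `R = R_Z(2π/p²)` the
diagonal rotation, one has `(R (X^c)† R†)† = X^c · D`, where `D` is diagonal with entries
`e^{-2πic/p²}·e^{2πi/p}` on the `c` indices `j < c` and `e^{-2πic/p²}` on the remaining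
`p - c` indices. -/
theorem stmt_8 (p : ℕ) (hp : 1 ≤ p) (c : ℕ) (hc : c < p)
    (X R D : Matrix (Fin p) (Fin p) ℂ)
    (hX : ∀ j k : Fin p, X j k = if (k : ℕ) = ((j : ℕ) + 1) % p then 1 else 0)
    (hR : R = Matrix.diagonal fun j : Fin p =>
        Complex.exp (2 * (Real.pi : ℂ) * Complex.I * ((j : ℕ) : ℂ) / (p : ℂ) ^ 2))
    (hD : D = Matrix.diagonal fun j : Fin p =>
        if (j : ℕ) < c then
          Complex.exp (-(2 * (Real.pi : ℂ) * Complex.I * (c : ℂ) / (p : ℂ) ^ 2)) *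
            Complex.exp (2 * (Real.pi : ℂ) * Complex.I / (p : ℂ))
        else Complex.exp (-(2 * (Real.pi : ℂ) * Complex.I * (c : ℂ) / (p : ℂ) ^ 2))) :
    (R * (X ^ c)ᴴ * Rᴴ)ᴴ = X ^ c * D :=
  stmt_8_general p c hc X R D hX hR hD
end

section
/- Let (Ω, μ) be a probability space, let α be a finite type, and let E, E′ : Ω → Finset α be (possibly dependent) measurable random finite sets. Suppose there are τ, ϱ ∈ [0,1] such that for every finite set F ⊆ α one has μ{ω : F ⊆ E(ω)} ≤ τ^{|F|} and μ{ω : F ⊆ E′(ω)} ≤ ϱ^{|F|}. Then for every finite set F ⊆ α, μ{ω : F ⊆ E(ω) ∪ E′(ω)} ≤ ( 2·max(√τ, √ϱ) )^{|F|}. -/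
open MeasureTheory

/- If `F ⊆ E ∪ E'`, then `A := F ∩ E` satisfies `A ⊆ E` and `F \ A ⊆ E'`; a union bound
over the `2 ^ |F|` choices of `A ⊆ F` reduces the claim to
`min (τ ^ |A|) (ϱ ^ |F \ A|) ≤ max (√τ) (√ϱ) ^ |F|`, which holds because one of `A`, `F \ A`
contains at least half of `F`. -/

section LocalStochastic

variable {Ω α : Type*} [MeasurableSpace Ω]

def IsLocalStochastic (μ : Measure Ω) (E : Ω → Finset α) (τ : ℝ) : Prop :=
  ∀ F : Finset α, μ {ω | F ⊆ E ω} ≤ ENNReal.ofReal (τ ^ F.card)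

theorem Finset.exists_subset_sdiff_subset_of_subset_union [DecidableEq α] {F s t : Finset α}
    (h : F ⊆ s ∪ t) : ∃ A ⊆ F, A ⊆ s ∧ F \ A ⊆ t :=
  ⟨F ∩ s, Finset.inter_subset_left, Finset.inter_subset_right, fun x hx => by
    simp only [Finset.mem_sdiff, Finset.mem_inter, not_and] at hx
    exact (Finset.mem_union.1 (h hx.1)).resolve_left (hx.2 hx.1)⟩

theorem measure_setOf_subset_union_le [DecidableEq α] (μ : Measure Ω) (E E' : Ω → Finset α)
    (F : Finset α) :
    μ {ω | F ⊆ E ω ∪ E' ω} ≤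
      ∑ A ∈ F.powerset, μ ({ω | A ⊆ E ω} ∩ {ω | F \ A ⊆ E' ω}) := by
  refine (measure_mono fun ω hω => ?_).trans (measure_biUnion_finset_le _ _)
  obtain ⟨A, hAF, hA⟩ := Finset.exists_subset_sdiff_subset_of_subset_union hω
  exact Set.mem_iUnion₂.2 ⟨A, Finset.mem_powerset.2 hAF, hA⟩

theorem pow_le_pow_of_sqrt_le {τ m : ℝ} (hτ : 0 ≤ τ) (hm : √τ ≤ m) (hm1 : m ≤ 1) {k n : ℕ}
    (hn : n ≤ 2 * k) : τ ^ k ≤ m ^ n :=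
  calc τ ^ k = √τ ^ (2 * k) := by rw [pow_mul, Real.sq_sqrt hτ]
    _ ≤ m ^ (2 * k) := pow_le_pow_left₀ (Real.sqrt_nonneg τ) hm _
    _ ≤ m ^ n := pow_le_pow_of_le_one ((Real.sqrt_nonneg τ).trans hm) hm1 hn

theorem min_pow_le_max_sqrt_pow {τ ϱ : ℝ} (hτ : τ ∈ Set.Icc (0 : ℝ) 1)
    (hϱ : ϱ ∈ Set.Icc (0 : ℝ) 1) (a b : ℕ) :
    min (τ ^ a) (ϱ ^ b) ≤ max √τ √ϱ ^ (a + b) := by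
  have hm1 : max √τ √ϱ ≤ 1 :=
    max_le (Real.sqrt_le_one.2 hτ.2) (Real.sqrt_le_one.2 hϱ.2)
  rcases le_total b a with hab | hab
  · exact (min_le_left _ _).trans
      (pow_le_pow_of_sqrt_le hτ.1 (le_max_left _ _) hm1 (by omega))
  · exact (min_le_right _ _).trans
      (pow_le_pow_of_sqrt_le hϱ.1 (le_max_right _ _) hm1 (by omega))

theorem IsLocalStochastic.union [DecidableEq α] {μ : Measure Ω} {E E' : Ω → Finset α}
    {τ ϱ : ℝ} (hτ : τ ∈ Set.Icc (0 : ℝ) 1) (hϱ : ϱ ∈ Set.Icc (0 : ℝ) 1)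
    (hE : IsLocalStochastic μ E τ) (hE' : IsLocalStochastic μ E' ϱ) :
    IsLocalStochastic μ (fun ω => E ω ∪ E' ω) (2 * max √τ √ϱ) := by
  intro F
  set m := max √τ √ϱ
  have hm : 0 ≤ m := (Real.sqrt_nonneg τ).trans (le_max_left _ _)
  have hterm : ∀ A ∈ F.powerset,
      μ ({ω | A ⊆ E ω} ∩ {ω | F \ A ⊆ E' ω}) ≤ ENNReal.ofReal (m ^ F.card) := by
    intro A hA
    have hcard : A.card + (F \ A).card = F.card := by
      rw [add_comm, Finset.card_sdiff_add_card_eq_card (Finset.mem_powerset.1 hA)]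
    calc μ ({ω | A ⊆ E ω} ∩ {ω | F \ A ⊆ E' ω})
        ≤ min (μ {ω | A ⊆ E ω}) (μ {ω | F \ A ⊆ E' ω}) :=
          le_min (measure_mono Set.inter_subset_left) (measure_mono Set.inter_subset_right)
      _ ≤ ENNReal.ofReal (min (τ ^ A.card) (ϱ ^ (F \ A).card)) := by
          rw [ENNReal.ofReal_min]; exact min_le_min (hE A) (hE' _)
      _ ≤ ENNReal.ofReal (m ^ F.card) := by
          rw [← hcard]; exact ENNReal.ofReal_le_ofReal (min_pow_le_max_sqrt_pow hτ hϱ _ _)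
  calc μ {ω | F ⊆ E ω ∪ E' ω}
      ≤ ∑ A ∈ F.powerset, μ ({ω | A ⊆ E ω} ∩ {ω | F \ A ⊆ E' ω}) :=
        measure_setOf_subset_union_le μ E E' F
    _ ≤ ∑ _A ∈ F.powerset, ENNReal.ofReal (m ^ F.card) := Finset.sum_le_sum hterm
    _ = ENNReal.ofReal ((2 * m) ^ F.card) := by
        rw [Finset.sum_const, Finset.card_powerset, nsmul_eq_mul, mul_pow,
          ENNReal.ofReal_mul (by positivity), ENNReal.ofReal_pow zero_le_two]
        norm_num

end LocalStochastic

theorem stmt_9_general {Ω : Type*} [MeasurableSpace Ω] (μ : Measure Ω)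
    {α : Type*} [DecidableEq α]
    (E E' : Ω → Finset α) (τ ϱ : ℝ)
    (hτ : τ ∈ Set.Icc (0 : ℝ) 1) (hϱ : ϱ ∈ Set.Icc (0 : ℝ) 1)
    (hE : ∀ F : Finset α, μ {ω | F ⊆ E ω} ≤ ENNReal.ofReal (τ ^ F.card))
    (hE' : ∀ F : Finset α, μ {ω | F ⊆ E' ω} ≤ ENNReal.ofReal (ϱ ^ F.card)) :
    ∀ F : Finset α, μ {ω | F ⊆ E ω ∪ E' ω} ≤
      ENNReal.ofReal ((2 * max (Real.sqrt τ) (Real.sqrt ϱ)) ^ F.card) :=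
  IsLocalStochastic.union hτ hϱ hE hE'

/-- Support-level composition property of local stochastic noise: if the random finite
sets `E` and `E'` are `τ`- and `ϱ`-local stochastic (i.e. `Pr[F ⊆ E] ≤ τ^{|F|}` and
`Pr[F ⊆ E'] ≤ ϱ^{|F|}` for all finite `F`), then their union is
`2·max(√τ,√ϱ)`-local stochastic. -/
theorem stmt_9 {Ω : Type*} [MeasurableSpace Ω] (μ : Measure Ω) [IsProbabilityMeasure μ]
    {α : Type*} [Fintype α] [DecidableEq α]
    (E E' : Ω → Finset α) (τ ϱ : ℝ)
    (hτ : τ ∈ Set.Icc (0 : ℝ) 1) (hϱ : ϱ ∈ Set.Icc (0 : ℝ) 1)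
    (hEmeas : ∀ F : Finset α, MeasurableSet {ω | F ⊆ E ω})
    (hE'meas : ∀ F : Finset α, MeasurableSet {ω | F ⊆ E' ω})
    (hE : ∀ F : Finset α, μ {ω | F ⊆ E ω} ≤ ENNReal.ofReal (τ ^ F.card))
    (hE' : ∀ F : Finset α, μ {ω | F ⊆ E' ω} ≤ ENNReal.ofReal (ϱ ^ F.card)) :
    ∀ F : Finset α, μ {ω | F ⊆ E ω ∪ E' ω} ≤
      ENNReal.ofReal ((2 * max (Real.sqrt τ) (Real.sqrt ϱ)) ^ F.card) :=
  stmt_9_general μ E E' τ ϱ hτ hϱ hE hE'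
end

section
/- Let p ≥ 2 and n, m, l be positive integers, and let D : {1, …, m(p−1)} → 𝒫({1, …, n(p−1)}) assign to each of m(p−1) output coordinates a set of at most l input coordinates. Group the n(p−1) input coordinates into n consecutive blocks of size p−1 and the m(p−1) output coordinates into m consecutive blocks of size p−1; say output block J touches input block i if some output coordinate in block J has an input coordinate of block i in its dependency set. Then there exists a set S of input blocks with |S| ≥ n² / ( n + m·(p−1)⁴·l² ) such that every output block touches at most one block of S. -/
/-!
Join two input blocks by an edge when some output block reads both; the required `S` is an
independent set of this graph. An output block reads at most `(p - 1) l` input blocks, so the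
degrees sum to at most `m ((p - 1) l)²`. The greedy argument (keep a vertex of minimum degree
`d`, delete its `d + 1` closed neighbours, recurse) gives an independent set `S` with
`|V|² ≤ |S| (|V| + ∑ deg)`, a Turán-type bound.
-/

open Finset

/-- AM–GM: `2ak ≤ s k² + (a + e)` since `s (a + e) ≥ a²`. -/
lemma Nat.sq_add_le_succ_mul_of_sq_le_mul {a e k s : ℕ} (hs : a ^ 2 ≤ s * (a + e)) :
    (a + k) ^ 2 ≤ (s + 1) * (a + e + k ^ 2) := by
  rcases Nat.eq_zero_or_pos (a + e) with h0 | hpos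
  · obtain rfl : a = 0 := by omega
    nlinarith
  · zify at *
    nlinarith [sq_nonneg ((a : ℤ) * k - (a + e)),
      mul_le_mul_of_nonneg_left hs (sq_nonneg (k : ℤ)),
      mul_pos (by exact_mod_cast hpos : (0 : ℤ) < a + e)
        (by positivity : (0 : ℤ) < (k : ℤ) ^ 2 + 1)]

namespace SimpleGraph

variable {α : Type*} [DecidableEq α] (G : SimpleGraph α) [DecidableRel G.Adj]

def degreeIn (V : Finset α) (u : α) : ℕ := #{w ∈ V | G.Adj u w}

lemma sum_degreeIn_sdiff_add_card_mul_le {V N : Finset α} (hNV : N ⊆ V) {d : ℕ}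
    (hd : ∀ u ∈ N, d ≤ G.degreeIn V u) :
    ∑ u ∈ V \ N, G.degreeIn (V \ N) u + #N * d ≤ ∑ u ∈ V, G.degreeIn V u := by
  rw [← sum_sdiff hNV, card_eq_sum_ones, sum_mul, one_mul]
  refine add_le_add (sum_le_sum fun u _ => card_le_card ?_) (sum_le_sum hd)
  exact filter_subset_filter _ sdiff_subset

theorem exists_isIndepSet_sq_card_le (V : Finset α) :
    ∃ S ⊆ V, G.IsIndepSet (S : Set α) ∧
      #V ^ 2 ≤ #S * (#V + ∑ u ∈ V, G.degreeIn V u) := by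
  induction V using Finset.strongInduction with
  | _ V ih =>
  rcases V.eq_empty_or_nonempty with rfl | hne
  · exact ⟨∅, by simp⟩
  obtain ⟨v, hv, hmin⟩ := V.exists_min_image (G.degreeIn V) hne
  set N := insert v {w ∈ V | G.Adj v w}
  have hNV : N ⊆ V := insert_subset hv (filter_subset _ _)
  have hvN : v ∈ N := mem_insert_self _ _
  have hNcard : #N = G.degreeIn V v + 1 := card_insert_of_notMem (by simp)
  obtain ⟨S, hSV, hSind, hScard⟩ := ih (V \ N) (sdiff_ssubset hNV ⟨v, hvN⟩)
  have hvS : ∀ w ∈ S, w ≠ v ∧ ¬ G.Adj v w := fun w hw => by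
    obtain ⟨hwV, hwN⟩ := mem_sdiff.mp (hSV hw)
    simp only [N, mem_insert, mem_filter, not_or, not_and] at hwN
    exact ⟨hwN.1, hwN.2 hwV⟩
  refine ⟨insert v S, insert_subset hv (hSV.trans sdiff_subset), ?_, ?_⟩
  · rw [coe_insert]
    exact Set.pairwise_insert.mpr
      ⟨hSind, fun w hw _ => ⟨(hvS w hw).2, fun h => (hvS w hw).2 h.symm⟩⟩
  · have hVcard : #V = #(V \ N) + #N := (card_sdiff_add_card_eq_card hNV).symm
    have hsum := G.sum_degreeIn_sdiff_add_card_mul_le hNV (fun u hu => hmin u (hNV hu))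
    rw [card_insert_of_notMem fun h => (hvS v h).1 rfl, hVcard]
    refine (Nat.sq_add_le_succ_mul_of_sq_le_mul hScard).trans (Nat.mul_le_mul_left _ ?_)
    rw [hNcard] at hsum ⊢
    nlinarith

end SimpleGraph

theorem Finset.exists_sq_card_le_and_card_inter_le_one {α ι : Type*} [Fintype α] [DecidableEq α]
    [Fintype ι] (T : ι → Finset α) :
    ∃ S : Finset α, Fintype.card α ^ 2 ≤ #S * (Fintype.card α + ∑ J, #(T J) ^ 2) ∧
      ∀ J, #(S ∩ T J) ≤ 1 := by
  classical
  set G := SimpleGraph.fromRel fun a b => ∃ J, a ∈ T J ∧ b ∈ T J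
  have hadj {a b : α} (h : G.Adj a b) : ∃ J, a ∈ T J ∧ b ∈ T J := by
    obtain ⟨-, ⟨J, ha, hb⟩ | ⟨J, hb, ha⟩⟩ := (SimpleGraph.fromRel_adj _ _ _).mp h <;>
      exact ⟨J, ha, hb⟩
  obtain ⟨S, -, hSind, hScard⟩ := G.exists_isIndepSet_sq_card_le univ
  refine ⟨S, ?_, fun J => card_le_one.mpr fun a ha b hb => ?_⟩
  · have hdeg : ∑ u, G.degreeIn univ u ≤ ∑ J, #(T J) ^ 2 := calc
      ∑ u, G.degreeIn univ u ≤ ∑ u, ∑ J with u ∈ T J, #(T J) := by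
        refine sum_le_sum fun u _ => (card_le_card fun w hw => ?_).trans card_biUnion_le
        obtain ⟨J, hu, hw⟩ := hadj (mem_filter.mp hw).2
        exact mem_biUnion.mpr ⟨J, mem_filter.mpr ⟨mem_univ _, hu⟩, hw⟩
      _ = ∑ J, ∑ u ∈ T J, #(T J) := sum_comm' fun _ _ => by simp
      _ = ∑ J, #(T J) ^ 2 := by simp [sq]
    rw [card_univ] at hScard
    exact hScard.trans (Nat.mul_le_mul_left _ (Nat.add_le_add_left hdeg _))
  · rw [mem_inter] at ha hb
    by_contra hab
    exact hSind ha.1 hb.1 hab ((SimpleGraph.fromRel_adj _ _ _).mpr ⟨hab, .inl ⟨J, ha.2, hb.2⟩⟩)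

namespace Fin

lemma card_filter_divNat_eq_le {m k : ℕ} (J : Fin m) : #{j : Fin (m * k) | j.divNat = J} ≤ k := by
  refine (card_le_card_of_injOn Fin.modNat (fun _ _ => mem_univ _) ?_).trans_eq (card_fin k)
  intro i hi j hj hij
  have hdiv : i.divNat = j.divNat := (mem_filter.mp hi).2.trans (mem_filter.mp hj).2.symm
  exact finProdFinEquiv.symm.injective (Prod.ext hdiv hij)

end Fin

section Blocks

variable {m n k : ℕ} (D : Fin (m * k) → Finset (Fin (n * k)))

/-- The input blocks read by output block `J`, where coordinate `j` lies in block `j / k`. -/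
def touchedBlocks (J : Fin m) : Finset (Fin n) :=
  Finset.biUnion {j : Fin (m * k) | j.divNat = J} fun j => (D j).image Fin.divNat

lemma mem_touchedBlocks {J : Fin m} {i : Fin n} :
    i ∈ touchedBlocks D J ↔ ∃ j : Fin (m * k), j.divNat = J ∧ ∃ a ∈ D j, a.divNat = i := by
  simp [touchedBlocks]

lemma card_touchedBlocks_le {l : ℕ} (hD : ∀ j, #(D j) ≤ l) (J : Fin m) :
    #(touchedBlocks D J) ≤ k * l := calc
  #(touchedBlocks D J) ≤ ∑ j : Fin (m * k) with j.divNat = J, #((D j).image Fin.divNat) :=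
    card_biUnion_le
  _ ≤ ∑ j : Fin (m * k) with j.divNat = J, l :=
    sum_le_sum fun j _ => card_image_le.trans (hD j)
  _ ≤ k * l := by
    rw [sum_const, smul_eq_mul]
    exact Nat.mul_le_mul_right _ (Fin.card_filter_divNat_eq_le J)

end Blocks

lemma Nat.cast_sub_one_sq_le_pow_four (p : ℕ) : (((p - 1 : ℕ) : ℝ)) ^ 2 ≤ ((p : ℝ) - 1) ^ 4 := by
  rcases p with _ | p
  · norm_num
  · rw [Nat.add_sub_cancel, Nat.cast_succ, add_sub_cancel_right]
    rcases p.eq_zero_or_pos with rfl | hp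
    · simp
    · exact pow_le_pow_right₀ (by exact_mod_cast hp) (by norm_num)

theorem stmt_10_general (p n m l : ℕ)
    (D : Fin (m * (p - 1)) → Finset (Fin (n * (p - 1))))
    (hD : ∀ j, (D j).card ≤ l) :
    ∃ S : Finset (Fin n),
      (n : ℝ) ^ 2 / ((n : ℝ) + (m : ℝ) * ((p : ℝ) - 1) ^ 4 * (l : ℝ) ^ 2) ≤ (S.card : ℝ) ∧
      ∀ J : Fin m, ∀ i₁ ∈ S, ∀ i₂ ∈ S,
        (∃ j : Fin (m * (p - 1)), (j : ℕ) / (p - 1) = (J : ℕ) ∧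
            ∃ a ∈ D j, (a : ℕ) / (p - 1) = (i₁ : ℕ)) →
        (∃ j : Fin (m * (p - 1)), (j : ℕ) / (p - 1) = (J : ℕ) ∧
            ∃ a ∈ D j, (a : ℕ) / (p - 1) = (i₂ : ℕ)) →
        i₁ = i₂ := by
  obtain ⟨S, hScard, hS⟩ := exists_sq_card_le_and_card_inter_le_one (touchedBlocks D)
  refine ⟨S, ?_, fun J i₁ h₁ i₂ h₂ hi₁ hi₂ =>
    card_le_one.mp (hS J) i₁ (mem_inter.2 ⟨h₁, ?_⟩) i₂ (mem_inter.2 ⟨h₂, ?_⟩)⟩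
  · have hsum : ∑ J, #(touchedBlocks D J) ^ 2 ≤ m * ((p - 1) * l) ^ 2 := by
      simpa using sum_le_card_nsmul univ _ _ fun J _ =>
        Nat.pow_le_pow_left (card_touchedBlocks_le D hD J) 2
    have hsumR : ((∑ J, #(touchedBlocks D J) ^ 2 : ℕ) : ℝ) ≤ m * ((p : ℝ) - 1) ^ 4 * l ^ 2 := calc
      _ ≤ (m * (((p - 1 : ℕ) : ℝ) ^ 2 * l ^ 2) : ℝ) := by exact_mod_cast hsum.trans_eq (by ring)
      _ ≤ m * ((p : ℝ) - 1) ^ 4 * l ^ 2 := by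
        rw [← mul_assoc]; gcongr; exact Nat.cast_sub_one_sq_le_pow_four p
    rw [Fintype.card_fin] at hScard
    refine div_le_of_le_mul₀ (by positivity) (by positivity) ?_
    calc (n : ℝ) ^ 2 ≤ #S * (n + (∑ J, #(touchedBlocks D J) ^ 2 : ℕ) : ℝ) := by
          exact_mod_cast hScard
      _ ≤ _ := by gcongr
  · simpa [mem_touchedBlocks, Fin.ext_iff] using hi₁
  · simpa [mem_touchedBlocks, Fin.ext_iff] using hi₂

/-- Block-locality lemma: for any dependency structure `D` on `m(p-1)` output
coordinates, each depending on at most `l` of the `n(p-1)` input coordinates, where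
inputs and outputs are grouped into consecutive blocks of size `p-1`, there is a set `S`
of input blocks with `|S| ≥ n²/(n + m(p-1)⁴l²)` such that every output block touches at
most one block of `S`. -/
theorem stmt_10 (p n m l : ℕ) (hp : 2 ≤ p) (hn : 0 < n) (hm : 0 < m) (hl : 0 < l)
    (D : Fin (m * (p - 1)) → Finset (Fin (n * (p - 1))))
    (hD : ∀ j, (D j).card ≤ l) :
    ∃ S : Finset (Fin n),
      (n : ℝ) ^ 2 / ((n : ℝ) + (m : ℝ) * ((p : ℝ) - 1) ^ 4 * (l : ℝ) ^ 2) ≤ (S.card : ℝ) ∧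
      ∀ J : Fin m, ∀ i₁ ∈ S, ∀ i₂ ∈ S,
        (∃ j : Fin (m * (p - 1)), (j : ℕ) / (p - 1) = (J : ℕ) ∧
            ∃ a ∈ D j, (a : ℕ) / (p - 1) = (i₁ : ℕ)) →
        (∃ j : Fin (m * (p - 1)), (j : ℕ) / (p - 1) = (J : ℕ) ∧
            ∃ a ∈ D j, (a : ℕ) / (p - 1) = (i₂ : ℕ)) →
        i₁ = i₂ :=
  stmt_10_general p n m l D hD
end

section
/- For every n ≥ 1 and every c ∈ {0, 1, 2}, the number of binary strings x ∈ {0,1}^{2n} whose Hamming weight |x| is divisible by 3 and satisfies (|x|/3) ≡ c (mod 3) is at most N · ( 1/3 + (9/10)ⁿ ), where N denotes the total number of strings x ∈ {0,1}^{2n} with 3 ∣ |x|. -/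
/-!
Roots-of-unity filter: if `ζ` is a primitive `q`-th root of unity, then
`q · #{x ∈ {0,1}^m : |x| ≡ r (mod q)} = ∑_{k<q} ζ^{-kr} (1 + ζ^k)^m`, whose `k = 0` term is `2^m`.
For `q = 9`, `ζ = e^{2πi/9}` and `m = 2n` the other terms have modulus
`|1 + ζ^k|^{2n} = (2 + 2 cos (2πk/9))^n`, which is at most `3.55^n` for `k = ±1`, `3^n` for `k = ±2`
and `1` otherwise, while for `q = 3` they have modulus `1`. As `4 · 9/10 = 3.6 > 3.55`, this gives
the bound for `n ≥ 4`; the cases `n < 4` are checked by computation.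
-/

open Finset Complex
open scoped Real

theorem Nat.dvd_sub_add_iff_mod_eq {q r s : ℕ} (hr : r < q) : q ∣ q - r + s ↔ s % q = r := by
  rw [show q - r + s = s + q - r by omega, ← Nat.modEq_iff_dvd' (by omega), Nat.ModEq,
    Nat.add_mod_right, Nat.mod_eq_of_lt hr, eq_comm]

theorem IsPrimitiveRoot.sum_pow_mul_eq_ite {R : Type*} [CommRing R] [IsDomain R] {ζ : R} {q : ℕ}
    (hζ : IsPrimitiveRoot ζ q) (t : ℕ) :
    ∑ k ∈ range q, ζ ^ (k * t) = if q ∣ t then (q : R) else 0 := by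
  simp_rw [mul_comm _ t, pow_mul]
  split_ifs with h
  · simp [(hζ.pow_eq_one_iff_dvd t).2 h]
  · have hne : ζ ^ t ≠ 1 := mt (hζ.pow_eq_one_iff_dvd t).1 h
    refine eq_zero_of_ne_zero_of_mul_left_eq_zero (sub_ne_zero_of_ne hne.symm) ?_
    rw [mul_neg_geom_sum, ← pow_mul, mul_comm, pow_mul, hζ.pow_eq_one, one_pow, sub_self]

theorem sum_pow_weight_eq {R : Type*} [CommSemiring R] (z : R) (m : ℕ) :
    ∑ x : Fin m → Fin 2, z ^ (∑ j, (x j : ℕ)) = (1 + z) ^ m := by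
  rw [show 1 + z = ∑ b : Fin 2, z ^ (b : ℕ) by simp [Fin.sum_univ_two], Fintype.sum_pow]
  simp_rw [prod_pow_eq_pow_sum]

theorem IsPrimitiveRoot.card_filter_weight_mod_eq {R : Type*} [CommRing R] [IsDomain R] {ζ : R}
    {q : ℕ} (hζ : IsPrimitiveRoot ζ q) (m : ℕ) {r : ℕ} (hr : r < q) :
    (q * #{x : Fin m → Fin 2 | (∑ j, (x j : ℕ)) % q = r} : R)
      = ∑ k ∈ range q, ζ ^ (k * (q - r)) * (1 + ζ ^ k) ^ m := by
  simp_rw [← sum_pow_weight_eq, mul_sum, ← pow_mul, ← pow_add, ← mul_add]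
  rw [sum_comm]
  simp_rw [hζ.sum_pow_mul_eq_ite, Nat.dvd_sub_add_iff_mod_eq hr, card_filter, Nat.cast_sum,
    mul_sum]
  simp

theorem IsPrimitiveRoot.abs_card_filter_weight_mod_sub_le {ζ : ℂ} {q : ℕ}
    (hζ : IsPrimitiveRoot ζ q) (m : ℕ) {r : ℕ} (hr : r < q) :
    |(q * #{x : Fin m → Fin 2 | (∑ j, (x j : ℕ)) % q = r} : ℝ) - 2 ^ m|
      ≤ ∑ k ∈ Ico 1 q, ‖1 + ζ ^ k‖ ^ m := by
  have h := hζ.card_filter_weight_mod_eq m hr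
  rw [range_eq_Ico, sum_eq_sum_Ico_succ_bot (by omega)] at h
  have hζ1 : ‖ζ‖ = 1 := hζ.norm'_eq_one (by omega)
  rw [← Real.norm_eq_abs, ← Complex.norm_real]
  push_cast
  rw [h, pow_zero, zero_mul, pow_zero, one_add_one_eq_two, one_mul, add_sub_cancel_left]
  refine (norm_sum_le _ _).trans (sum_le_sum fun k _ => ?_)
  rw [norm_mul, norm_pow, norm_pow, hζ1, one_pow, one_mul]

theorem norm_one_add_exp_mul_I_sq (θ : ℝ) : ‖1 + exp (θ * I)‖ ^ 2 = 2 + 2 * Real.cos θ := by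
  rw [Complex.sq_norm, normSq_apply]
  simp only [add_re, add_im, one_re, one_im, exp_ofReal_mul_I_re, exp_ofReal_mul_I_im]
  nlinarith [Real.sin_sq_add_cos_sq θ]

theorem norm_one_add_exp_pow_sq (q k : ℕ) :
    ‖1 + exp (2 * π * I / q) ^ k‖ ^ 2 = 2 + 2 * Real.cos (2 * π * k / q) := by
  rw [← exp_nat_mul, ← norm_one_add_exp_mul_I_sq]
  push_cast
  ring_nf

theorem Real.cos_le_cos_of_le_of_le_two_pi_sub {x y : ℝ} (hy : 0 ≤ y) (hyx : y ≤ x)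
    (hx : x ≤ 2 * π - y) : cos x ≤ cos y := by
  rcases le_total x π with hxπ | hπx
  · exact cos_le_cos_of_nonneg_of_le_pi hy hxπ hyx
  · rw [← cos_two_pi_sub x]
    exact cos_le_cos_of_nonneg_of_le_pi hy (by linarith) (by linarith)

theorem Real.cos_two_pi_mul_div_le {q j k : ℕ} (hjk : j ≤ k) (hkq : k + j ≤ q) :
    cos (2 * π * k / q) ≤ cos (2 * π * j / q) := by
  rcases Nat.eq_zero_or_pos q with rfl | hq
  · simp
  have hq' : (0 : ℝ) < q := by exact_mod_cast hq
  have hjk' : (j : ℝ) ≤ k := by exact_mod_cast hjk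
  have hkq' : (k : ℝ) + j ≤ q := by exact_mod_cast hkq
  apply cos_le_cos_of_le_of_le_two_pi_sub (by positivity)
  · gcongr
  · rw [div_le_iff₀ hq', sub_mul, div_mul_cancel₀ _ hq'.ne']
    nlinarith [pi_pos]

theorem Real.cos_two_pi_div_nine_lt : cos (2 * π / 9) < 31 / 40 := by
  set x := 2 * π / 9 with hx
  have hx0 : 0.697 < x := by rw [hx]; linarith [pi_gt_d2]
  have hx1 : x < 0.7 := by rw [hx]; linarith [pi_lt_d2]
  have hb := cos_bound (x := x) (by rw [abs_of_pos (by linarith)]; linarith)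
  rw [abs_of_pos (by linarith : 0 < x)] at hb
  have hsq : 0.697 ^ 2 < x ^ 2 := by gcongr
  have hfour : x ^ 4 < 0.7 ^ 4 := by gcongr
  linarith [(abs_le.1 hb).2]

theorem Real.cos_two_pi_div_three : cos (2 * π / 3) = -1 / 2 := by
  rw [show 2 * π / 3 = π - π / 3 by ring, cos_pi_sub, cos_pi_div_three]
  norm_num

theorem norm_one_add_exp_pow_sq_le_nine {k : ℕ} (hk : k ∈ Ico 1 9) :
    ‖1 + exp (2 * π * I / 9) ^ k‖ ^ 2
      ≤ if k = 1 ∨ k = 8 then 71 / 20 else if k = 2 ∨ k = 7 then 3 else 1 := by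
  have h := norm_one_add_exp_pow_sq 9 k
  push_cast at h
  rw [h]
  obtain ⟨hk1, hk9⟩ := mem_Ico.1 hk
  split_ifs with h18 h27
  · have hcos := Real.cos_two_pi_mul_div_le (q := 9) (j := 1) (k := k) (by omega) (by omega)
    push_cast at hcos
    rw [mul_one] at hcos
    linarith [Real.cos_two_pi_div_nine_lt]
  · have hcos := Real.cos_two_pi_mul_div_le (q := 9) (j := 2) (k := k) (by omega) (by omega)
    have hcos' : Real.cos (2 * π * 2 / 9) ≤ Real.cos (π / 3) :=
      Real.cos_le_cos_of_nonneg_of_le_pi (by positivity) (by linarith [Real.pi_pos])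
        (by linarith [Real.pi_pos])
    push_cast at hcos
    linarith [Real.cos_pi_div_three]
  · have hcos := Real.cos_two_pi_mul_div_le (q := 9) (j := 3) (k := k) (by omega) (by omega)
    push_cast at hcos
    rw [show 2 * π * 3 / 9 = 2 * π / 3 by ring, Real.cos_two_pi_div_three] at hcos
    linarith

theorem sum_norm_one_add_exp_pow_le_nine (n : ℕ) :
    ∑ k ∈ Ico 1 9, ‖1 + exp (2 * π * I / 9) ^ k‖ ^ (2 * n)
      ≤ 2 * (71 / 20) ^ n + 2 * 3 ^ n + 4 := by
  calc ∑ k ∈ Ico 1 9, ‖1 + exp (2 * π * I / 9) ^ k‖ ^ (2 * n)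
      ≤ ∑ k ∈ Ico 1 9,
          (if k = 1 ∨ k = 8 then (71 / 20 : ℝ) else if k = 2 ∨ k = 7 then 3 else 1) ^ n := by
        refine sum_le_sum fun k hk => ?_
        rw [pow_mul]
        exact pow_le_pow_left₀ (by positivity) (norm_one_add_exp_pow_sq_le_nine hk) n
    _ = 2 * (71 / 20) ^ n + 2 * 3 ^ n + 4 := by
        simp [sum_Ico_eq_sum_range, sum_range_succ]
        ring

theorem sum_norm_one_add_exp_pow_le_three (n : ℕ) :
    ∑ k ∈ Ico 1 3, ‖1 + exp (2 * π * I / 3) ^ k‖ ^ (2 * n) ≤ 2 := by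
  calc ∑ k ∈ Ico 1 3, ‖1 + exp (2 * π * I / 3) ^ k‖ ^ (2 * n)
      ≤ ∑ k ∈ Ico 1 3, (1 : ℝ) := by
        refine sum_le_sum fun k hk => ?_
        obtain ⟨hk1, hk3⟩ := mem_Ico.1 hk
        have h := norm_one_add_exp_pow_sq 3 k
        have hcos := Real.cos_two_pi_mul_div_le (q := 3) (j := 1) (k := k) (by omega) (by omega)
        push_cast at h hcos
        rw [mul_one, Real.cos_two_pi_div_three] at hcos
        rw [pow_mul, h]
        exact pow_le_one₀ (by nlinarith [Real.neg_one_le_cos (2 * π * k / 3)]) (by linarith)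
    _ = 2 := by simp

theorem two_mul_pow_add_two_mul_three_pow_add_twelve_le {n : ℕ} (hn : 4 ≤ n) :
    2 * (71 / 20 : ℝ) ^ n + 2 * 3 ^ n + 12 ≤ 3 * (18 / 5) ^ n := by
  induction n, hn using Nat.le_induction with
  | base => norm_num
  | succ n _ ih =>
    rw [pow_succ, pow_succ, pow_succ]
    nlinarith [pow_pos (by norm_num : (0 : ℝ) < 71 / 20) n, pow_pos (by norm_num : (0 : ℝ) < 3) n]

theorem card_weight_mod_nine_le_of_four_le {n c : ℕ} (hn : 4 ≤ n) (hc : c < 3) :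
    (#{x : Fin (2 * n) → Fin 2 | (∑ j, (x j : ℕ)) % 9 = 3 * c} : ℝ)
      ≤ #{x : Fin (2 * n) → Fin 2 | (∑ j, (x j : ℕ)) % 3 = 0} * (1 / 3 + (9 / 10) ^ n) := by
  have h9 := (abs_le.1 ((isPrimitiveRoot_exp 9 (by norm_num)).abs_card_filter_weight_mod_sub_le
    (2 * n) (r := 3 * c) (by omega))).2
  have h3 := (abs_le.1 ((isPrimitiveRoot_exp 3 (by norm_num)).abs_card_filter_weight_mod_sub_le
    (2 * n) (r := 0) (by norm_num))).1
  push_cast at h9 h3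
  have hE9 := sum_norm_one_add_exp_pow_le_nine n
  have hE3 := sum_norm_one_add_exp_pow_le_three n
  have h4 : (2 : ℝ) ^ (2 * n) = 4 ^ n := by rw [pow_mul]; norm_num
  set N := (#{x : Fin (2 * n) → Fin 2 | (∑ j, (x j : ℕ)) % 3 = 0} : ℝ)
  have hN : ((4 : ℝ) ^ n - 2) * (9 / 10) ^ n ≤ 3 * N * (9 / 10) ^ n :=
    mul_le_mul_of_nonneg_right (by linarith) (by positivity)
  have h36 : (4 : ℝ) ^ n * (9 / 10) ^ n = (18 / 5) ^ n := by rw [← mul_pow]; norm_num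
  have h09 : (9 / 10 : ℝ) ^ n ≤ 1 := pow_le_one₀ (by norm_num) (by norm_num)
  nlinarith [two_mul_pow_add_two_mul_three_pow_add_twelve_le hn]

theorem nat_card_weight_mod_nine_le_of_lt_four :
    ∀ n < 4, ∀ c < 3, 3 * 10 ^ n * #{x : Fin (2 * n) → Fin 2 | (∑ j, (x j : ℕ)) % 9 = 3 * c}
      ≤ #{x : Fin (2 * n) → Fin 2 | (∑ j, (x j : ℕ)) % 3 = 0} * (10 ^ n + 3 * 9 ^ n) := by
  decide

theorem card_weight_mod_nine_le_of_lt_four {n c : ℕ} (hn : n < 4) (hc : c < 3) :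
    (#{x : Fin (2 * n) → Fin 2 | (∑ j, (x j : ℕ)) % 9 = 3 * c} : ℝ)
      ≤ #{x : Fin (2 * n) → Fin 2 | (∑ j, (x j : ℕ)) % 3 = 0} * (1 / 3 + (9 / 10) ^ n) := by
  have h : (3 * 10 ^ n * #{x : Fin (2 * n) → Fin 2 | (∑ j, (x j : ℕ)) % 9 = 3 * c} : ℝ)
      ≤ #{x : Fin (2 * n) → Fin 2 | (∑ j, (x j : ℕ)) % 3 = 0} * (10 ^ n + 3 * 9 ^ n) := by
    exact_mod_cast nat_card_weight_mod_nine_le_of_lt_four n hn c hc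
  refine le_of_mul_le_mul_left (h.trans_eq ?_) (by positivity : (0 : ℝ) < 3 * 10 ^ n)
  rw [div_pow]
  field_simp

theorem stmt_16_general (n : ℕ) (c : ℕ) (hc : c < 3) :
    (((univ : Finset (Fin (2 * n) → Fin 2)).filter (fun x =>
        3 ∣ (∑ j, (x j : ℕ)) ∧ (∑ j, (x j : ℕ)) / 3 % 3 = c)).card : ℝ)
      ≤ (((univ : Finset (Fin (2 * n) → Fin 2)).filter (fun x =>
          3 ∣ ∑ j, (x j : ℕ))).card : ℝ) * (1 / 3 + (9 / 10) ^ n) := by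
  have hA : (univ : Finset (Fin (2 * n) → Fin 2)).filter
        (fun x => 3 ∣ (∑ j, (x j : ℕ)) ∧ (∑ j, (x j : ℕ)) / 3 % 3 = c)
      = univ.filter (fun x => (∑ j, (x j : ℕ)) % 9 = 3 * c) := filter_congr fun x _ => by omega
  have hN : (univ : Finset (Fin (2 * n) → Fin 2)).filter (fun x => 3 ∣ ∑ j, (x j : ℕ))
      = univ.filter (fun x => (∑ j, (x j : ℕ)) % 3 = 0) :=
    filter_congr fun x _ => Nat.dvd_iff_mod_eq_zero
  rw [hA, hN]
  rcases lt_or_ge n 4 with hn | hn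
  · exact card_weight_mod_nine_le_of_lt_four hn hc
  · exact card_weight_mod_nine_le_of_four_le hn hc

/-- Counting bound for the ternary Modular XOR game under the Hamming bit-to-trit
encoding: for every `c ∈ {0,1,2}`, the number of binary strings `x ∈ {0,1}^{2n}` with
`3 ∣ |x|` and `(|x|/3) ≡ c (mod 3)` is at most `N·(1/3 + (9/10)ⁿ)`, where `N` is the
number of binary strings of length `2n` whose Hamming weight is divisible by `3`. -/
theorem stmt_16 (n : ℕ) (hn : 1 ≤ n) (c : ℕ) (hc : c < 3) :
    (((univ : Finset (Fin (2 * n) → Fin 2)).filter (fun x =>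
        3 ∣ (∑ j, (x j : ℕ)) ∧ (∑ j, (x j : ℕ)) / 3 % 3 = c)).card : ℝ)
      ≤ (((univ : Finset (Fin (2 * n) → Fin 2)).filter (fun x =>
          3 ∣ ∑ j, (x j : ℕ))).card : ℝ) * (1 / 3 + (9 / 10) ^ n) :=
  stmt_16_general n c hc
end
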